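/- arXiv:2503.03488 — 7 statements merged into one kernel-verified Lean document; each statement's English description precedes it below -/
import Mathlib

section
/- For every string X ∈ Σ* and every k ≥ 0, shrink_{k+1}(X̄_k) = shrink_{k+1}(L_k) · X̄_{k+1} · shrink_{k+1}(R_k); consequently |shrink_{k+1}(X̄_k)| ≤ |X̄_{k+1}| + 2. -/
namespace IPM

/-- The universal alphabet `𝒜`: least fixed point of `𝒜 = Σ ∪ (𝒜 × 𝒜) ∪ (𝒜 × ℤ_{≥2})`. -/
inductive UA (α : Type) where
  | sym  : α → UA α
  | pair : UA α → UA α → UA α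
  | pow  : UA α → {m : ℕ // 2 ≤ m} → UA α
  deriving DecidableEq

variable {α : Type} [DecidableEq α]

/-- Expansion of a single symbol of the universal alphabet. -/
def expand : UA α → List α
  | .sym c => [c]
  | .pair b c => expand b ++ expand c
  | .pow b m => (List.replicate m.1 (expand b)).flatten

/-- Expansion of a string of symbols (homomorphic extension). -/
def expandStr (T : List (UA α)) : List α := (T.map expand).flatten

/-- Decomposition of a string into blocks: a block boundary is placed between
adjacent symbols `a` and `b` unless `glue a b` holds. -/
def chunks {γ : Type} (glue : γ → γ → Bool) : List γ → List (List γ)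
  | [] => []
  | [a] => [[a]]
  | a :: b :: rest =>
    match chunks glue (b :: rest) with
    | [] => [[a]]
    | blk :: G => if glue a b then (a :: blk) :: G else [a] :: blk :: G

/-- Collapse a block: a length-1 block stays, a power block `A^m` (m ≥ 2) becomes the
symbol `(A, m)`, and a length-2 block `BC` with `B ≠ C` becomes the symbol `(B, C)`. -/
def collapse : List (UA α) → List (UA α)
  | [] => []
  | [a] => [a]
  | a :: b :: rest =>
    if (b :: rest).all (fun x => decide (x = a)) then
      [.pow a ⟨rest.length + 2, by omega⟩]
    else [.pair a b]

/-- Shrinking with respect to a glue relation: decompose into blocks and collapse them. -/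
def shrinkWith (glue : UA α → UA α → Bool) (T : List (UA α)) : List (UA α) :=
  ((chunks glue T).map collapse).flatten

/-- In the `rle_B`-decomposition, no boundary is placed between `a` and `b` iff `a = b ∈ B`. -/
def rleGlue (B : Set (UA α)) [DecidablePred (· ∈ B)] : UA α → UA α → Bool :=
  fun a b => decide (a = b ∧ a ∈ B)

/-- In the `pc_{L,R}`-decomposition, no boundary is placed between `a` and `b`
iff `a ∈ L` and `b ∈ R`. -/
def pcGlue (L R : Set (UA α)) [DecidablePred (· ∈ L)] [DecidablePred (· ∈ R)] :
    UA α → UA α → Bool :=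
  fun a b => decide (a ∈ L ∧ b ∈ R)

/-- Restricted run-length encoding `rle_B`. -/
def rleC (B : Set (UA α)) [DecidablePred (· ∈ B)] (T : List (UA α)) : List (UA α) :=
  shrinkWith (rleGlue B) T

/-- Restricted pair compression `pc_{L,R}`. -/
def pcC (L R : Set (UA α)) [DecidablePred (· ∈ L)] [DecidablePred (· ∈ R)]
    (T : List (UA α)) : List (UA α) :=
  shrinkWith (pcGlue L R) T


section Recompression

variable (Bs Ls Rs : ℕ → Set (UA α))
variable [∀ k, DecidablePred (· ∈ Bs k)] [∀ k, DecidablePred (· ∈ Ls k)]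
variable [∀ k, DecidablePred (· ∈ Rs k)]

/-- The glue relation of `shrink_k`: run-length encoding `rle_{ℬ_k}` for odd `k`,
pair compression `pc_{ℒ_k,ℛ_k}` for even `k`. -/
def glueK (k : ℕ) : UA α → UA α → Bool :=
  if k % 2 = 1 then rleGlue (Bs k) else pcGlue (Ls k) (Rs k)

/-- `shrink_k`: `rle_{ℬ_k}` for odd `k`, `pc_{ℒ_k,ℛ_k}` for even `k`. -/
def shrinkK (k : ℕ) (T : List (UA α)) : List (UA α) :=
  shrinkWith (glueK Bs Ls Rs k) T

/-- The restricted recompression sequence: `T_0 = T`, `T_k = shrink_k(T_{k-1})`. -/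
def Tseq (T : List α) : ℕ → List (UA α)
  | 0 => T.map .sym
  | k + 1 => shrinkK Bs Ls Rs (k + 1) (Tseq T k)

/-- Whether a string consists of copies of a single symbol. -/
def isUniform : List (UA α) → Bool
  | [] => true
  | a :: rest => rest.all (fun x => decide (x = a))

/-- The leftmost block of the `glue`-decomposition of `T`, or `ε` if there are no
blocks or that block consists of two distinct symbols. -/
def leftBlock (glue : UA α → UA α → Bool) (T : List (UA α)) : List (UA α) :=
  match chunks glue T with
  | [] => []
  | blk :: _ => if isUniform blk then blk else []

/-- The rightmost block of the `glue`-decomposition of `T`, or `ε` if there is at most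
one block or that block consists of two distinct symbols. -/
def rightBlock (glue : UA α → UA α → Bool) (T : List (UA α)) : List (UA α) :=
  let G := chunks glue T
  if G.length ≤ 1 then []
  else
    let blk := G.getLastD []
    if isUniform blk then blk else []

/-- The popped-sequence strings `X̄_k`: `X̄_0 = X` and
`X̄_{k+1} = shrink_{k+1}(X̄'_k)` where `X̄_k = L_k ⬝ X̄'_k ⬝ R_k`. -/
def Xbar (X : List α) : ℕ → List (UA α)
  | 0 => X.map .sym
  | k + 1 =>
    let Xb := Xbar X k
    let L := leftBlock (glueK Bs Ls Rs (k + 1)) Xb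
    let R := rightBlock (glueK Bs Ls Rs (k + 1)) Xb
    shrinkK Bs Ls Rs (k + 1) ((Xb.drop L.length).take (Xb.length - L.length - R.length))

/-- The popped-sequence block `L_k`. -/
def Lblk (X : List α) (k : ℕ) : List (UA α) :=
  leftBlock (glueK Bs Ls Rs (k + 1)) (Xbar Bs Ls Rs X k)

/-- The popped-sequence block `R_k`. -/
def Rblk (X : List α) (k : ℕ) : List (UA α) :=
  rightBlock (glueK Bs Ls Rs (k + 1)) (Xbar Bs Ls Rs X k)

end Recompression

section Aux
variable {γ : Type}

lemma chunks_cons_cons {glue : γ → γ → Bool} {b : γ} {r blk : List γ} {G : List (List γ)}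
    (h : chunks glue (b :: r) = blk :: G) (a : γ) :
    chunks glue (a :: b :: r) = if glue a b then (a :: blk) :: G else [a] :: blk :: G := by
  rw [show chunks glue (a :: b :: r) =
    match chunks glue (b :: r) with
    | [] => [[a]]
    | blk :: G => if glue a b then (a :: blk) :: G else [a] :: blk :: G from rfl, h]

lemma chunks_cons_ne (glue : γ → γ → Bool) (a : γ) (l : List γ) :
    chunks glue (a :: l) ≠ [] := by
  cases l with
  | nil => simp [chunks]
  | cons b r =>
    cases h : chunks glue (b :: r) with
    | nil =>
      rw [show chunks glue (a :: b :: r) =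
        match chunks glue (b :: r) with
        | [] => [[a]]
        | blk :: G => if glue a b then (a :: blk) :: G else [a] :: blk :: G from rfl, h]
      simp
    | cons blk G => rw [chunks_cons_cons h a]; split <;> simp

lemma chunks_flatten (glue : γ → γ → Bool) (T : List γ) :
    (chunks glue T).flatten = T := by
  induction T with
  | nil => rfl
  | cons a rest ih =>
    cases rest with
    | nil => simp [chunks]
    | cons b r =>
      cases h : chunks glue (b :: r) with
      | nil => exact absurd h (chunks_cons_ne glue b r)
      | cons blk G =>
        rw [h] at ih
        simp only [List.flatten_cons] at ih
        rw [chunks_cons_cons h a]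
        split <;> simp [ih]

lemma chunks_head (glue : γ → γ → Bool) (x : γ) (l : List γ) {blk : List γ} {G : List (List γ)}
    (h : chunks glue (x :: l) = blk :: G) : blk.head? = some x := by
  cases l with
  | nil =>
    have : ([[x]] : List (List γ)) = blk :: G := h
    cases this; rfl
  | cons b r =>
    cases h' : chunks glue (b :: r) with
    | nil => exact absurd h' (chunks_cons_ne glue b r)
    | cons blk' G' =>
      rw [chunks_cons_cons h' x] at h
      split at h <;> · cases h; rfl

lemma chunks_append (glue : γ → γ → Bool) {A B : List γ} {a b : γ}
    (ha : A.getLast? = some a) (hb : B.head? = some b) (hg : glue a b = false) :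
    chunks glue (A ++ B) = chunks glue A ++ chunks glue B := by
  induction A with
  | nil => simp at ha
  | cons x A ih =>
    cases A with
    | nil =>
      have hxa : x = a := by simpa using ha
      subst hxa
      cases B with
      | nil => simp at hb
      | cons y B' =>
        have hyb : y = b := by simpa using hb
        subst hyb
        simp only [List.cons_append, List.nil_append]
        cases h : chunks glue (y :: B') with
        | nil => exact absurd h (chunks_cons_ne glue y B')
        | cons blk G => rw [chunks_cons_cons h x, if_neg (by simp [hg])]; simp [chunks, h]
    | cons x' A' =>
      have ha' : (x' :: A').getLast? = some a := by
        rwa [List.getLast?_cons_cons] at ha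
      have key := ih ha'
      cases h : chunks glue (x' :: A') with
      | nil => exact absurd h (chunks_cons_ne glue x' A')
      | cons blk G =>
        rw [h] at key
        have hne : chunks glue (x' :: (A' ++ B)) = blk :: (G ++ chunks glue B) := by
          simpa using key
        rw [show x :: x' :: A' ++ B = x :: x' :: (A' ++ B) from rfl,
          chunks_cons_cons hne x, chunks_cons_cons h x]
        split <;> simp

/-- Boundary condition between two adjacent chunks. -/
def Bdry (glue : γ → γ → Bool) (c d : List γ) : Prop :=
  ∀ a b, c.getLast? = some a → d.head? = some b → glue a b = false

/-- Invariant satisfied by chunk decompositions. -/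
def ChunksOK (glue : γ → γ → Bool) (G : List (List γ)) : Prop :=
  (∀ c ∈ G, c ≠ [] ∧ chunks glue c = [c]) ∧ List.Chain' (Bdry glue) G

lemma ChunksOK_infix {glue : γ → γ → Bool} {G' G : List (List γ)}
    (h : G' <:+: G) (hG : ChunksOK glue G) : ChunksOK glue G' :=
  ⟨fun c hc => hG.1 c (h.subset hc), hG.2.infix h⟩

lemma chunksOK_chunks (glue : γ → γ → Bool) (T : List γ) :
    ChunksOK glue (chunks glue T) := by
  induction T with
  | nil => exact ⟨by simp [chunks], by simp [chunks, List.Chain']⟩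
  | cons a rest ih =>
    cases rest with
    | nil =>
      refine ⟨?_, by simp [chunks, List.Chain']⟩
      intro c hc
      simp [chunks] at hc
      subst hc
      exact ⟨by simp, rfl⟩
    | cons b r =>
      cases h : chunks glue (b :: r) with
      | nil => exact absurd h (chunks_cons_ne glue b r)
      | cons blk G =>
        rw [h] at ih
        have hhd : blk.head? = some b := chunks_head glue b r h
        have hblk1 : chunks glue blk = [blk] := (ih.1 blk (by simp)).2
        rw [chunks_cons_cons h a]
        obtain ⟨y, blk', rfl⟩ : ∃ y blk', blk = y :: blk' := by
          cases blk with
          | nil => simp at hhd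
          | cons y blk' => exact ⟨y, blk', rfl⟩
        simp only [List.head?_cons, Option.some.injEq] at hhd; subst hhd
        by_cases hg : glue a y = true
        · simp only [hg, if_true]
          constructor
          · intro c hc
            rcases List.mem_cons.1 hc with rfl | hc
            · exact ⟨by simp, by rw [chunks_cons_cons hblk1 a, if_pos hg]⟩
            · exact ih.1 c (List.mem_cons_of_mem _ hc)
          · show List.IsChain _ _; rw [List.isChain_cons]
            refine ⟨?_, (List.isChain_cons.1 ih.2).2⟩
            intro y hy
            have hB := (List.isChain_cons.1 ih.2).1 y hy
            intro p q hp hq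
            exact hB p q (by rwa [List.getLast?_cons_cons] at hp) hq
        · simp only [Bool.not_eq_true] at hg
          simp only [hg, Bool.false_eq_true, if_false]
          constructor
          · intro c hc
            rcases List.mem_cons.1 hc with rfl | hc
            · exact ⟨by simp, rfl⟩
            · exact ih.1 c hc
          · show List.IsChain _ _; rw [List.isChain_cons]
            refine ⟨?_, ih.2⟩
            intro z hz
            simp only [Option.mem_def, List.head?_cons, Option.some.injEq] at hz
            subst hz
            intro p q hp hq
            simp only [List.getLast?_singleton, Option.some.injEq] at hp
            simp only [List.head?_cons, Option.some.injEq] at hq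
            subst hp; subst hq
            exact hg

lemma chunks_of_ok {glue : γ → γ → Bool} {G : List (List γ)}
    (h : ChunksOK glue G) : chunks glue G.flatten = G := by
  induction G with
  | nil => rfl
  | cons c G ih =>
    cases G with
    | nil => simpa using (h.1 c (by simp)).2
    | cons d G' =>
      obtain ⟨hc, hc1⟩ := h.1 c (by simp)
      obtain ⟨hd, -⟩ := h.1 d (by simp)
      obtain ⟨y, d', rfl⟩ : ∃ y d', d = y :: d' := by
        cases d with
        | nil => exact absurd rfl hd
        | cons y d' => exact ⟨y, d', rfl⟩
      have ha : c.getLast? = some (c.getLast hc) := List.getLast?_eq_getLast hc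
      have hbd : Bdry glue c (y :: d') := (List.isChain_cons.1 h.2).1 (y :: d') rfl
      have hb2 : (((y :: d') :: G').flatten).head? = some y := by
        simp [List.flatten_cons]
      have hg : glue (c.getLast hc) y = false := hbd _ _ ha rfl
      have htl : ChunksOK glue ((y :: d') :: G') :=
        ChunksOK_infix ⟨[c], [], by simp⟩ h
      rw [List.flatten_cons, chunks_append glue ha hb2 hg, hc1, ih htl]
      rfl
end Aux

section Main
variable {α : Type} [DecidableEq α]

lemma collapse_length_le (l : List (UA α)) : (collapse l).length ≤ 1 := by
  match l with
  | [] => simp [collapse]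
  | [a] => simp [collapse]
  | a :: b :: r => simp only [collapse]; split <;> simp

lemma shrink_small {G : List (List (UA α))} (h : G.length ≤ 1) :
    ((G.map collapse).flatten).length ≤ 1 := by
  match G with
  | [] => simp
  | [c] => simpa using collapse_length_le c
  | c :: d :: r => simp at h

lemma shrinkWith_decomp (glue : UA α → UA α → Bool) (T : List (UA α)) :
    shrinkWith glue T
      = shrinkWith glue (leftBlock glue T)
        ++ shrinkWith glue ((T.drop (leftBlock glue T).length).take
            (T.length - (leftBlock glue T).length - (rightBlock glue T).length))
        ++ shrinkWith glue (rightBlock glue T) ∧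
    (shrinkWith glue (leftBlock glue T)).length ≤ 1 ∧
    (shrinkWith glue (rightBlock glue T)).length ≤ 1 := by
  obtain ⟨Gl, Gm, Gr, hG, hlen_l, hlen_r, hL, hR⟩ :
      ∃ Gl Gm Gr, chunks glue T = Gl ++ Gm ++ Gr ∧ Gl.length ≤ 1 ∧ Gr.length ≤ 1 ∧
        leftBlock glue T = Gl.flatten ∧ rightBlock glue T = Gr.flatten := by
    cases hc : chunks glue T with
    | nil =>
      exact ⟨[], [], [], by simp [hc], by simp, by simp,
        by simp [leftBlock, hc], by simp [rightBlock, hc]⟩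
    | cons c G' =>
      cases G' with
      | nil =>
        by_cases hu : isUniform c = true
        · exact ⟨[c], [], [], by simp [hc], by simp, by simp,
            by simp [leftBlock, hc, hu], by simp [rightBlock, hc]⟩
        · exact ⟨[], [c], [], by simp [hc], by simp, by simp,
            by simp [leftBlock, hc, hu], by simp [rightBlock, hc]⟩
      | cons d G'' =>
        set e := (d :: G'').getLast (by simp) with he_def
        have he : (c :: d :: G'').getLastD [] = e := by
          rw [List.getLastD_eq_getLast?, List.getLast?_eq_getLast (by simp)]
          simp [List.getLast_cons, he_def]
        have hsplit : d :: G'' = (d :: G'').dropLast ++ [e] :=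
          (List.dropLast_append_getLast (by simp)).symm
        have hrB : rightBlock glue T = if isUniform e then e else [] := by
          simp only [rightBlock, hc, he]
          rw [if_neg (by simp)]
        have hlB : leftBlock glue T = if isUniform c then c else [] := by
          simp only [leftBlock, hc]
        by_cases hu : isUniform c = true <;> by_cases hv : isUniform e = true
        · refine ⟨[c], (d :: G'').dropLast, [e], ?_, by simp, by simp,
            by simp [hlB, hu], by simp [hrB, hv]⟩
          simp only [List.cons_append, List.nil_append, List.append_assoc]
          rw [← hsplit]
        · exact ⟨[c], d :: G'', [], by simp [hc], by simp, by simp,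
            by simp [hlB, hu], by simp [hrB, hv]⟩
        · refine ⟨[], c :: (d :: G'').dropLast, [e], ?_, by simp, by simp,
            by simp [hlB, hu], by simp [hrB, hv]⟩
          simp only [List.nil_append, List.cons_append]
          rw [← hsplit]
        · exact ⟨[], c :: d :: G'', [], by simp [hc], by simp, by simp,
            by simp [hlB, hu], by simp [hrB, hv]⟩
  have hOK : ChunksOK glue (chunks glue T) := chunksOK_chunks glue T
  have hOKl : ChunksOK glue Gl :=
    ChunksOK_infix ⟨[], Gm ++ Gr, by rw [hG]; simp⟩ hOK
  have hOKm : ChunksOK glue Gm :=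
    ChunksOK_infix ⟨Gl, Gr, by rw [hG]⟩ hOK
  have hOKr : ChunksOK glue Gr :=
    ChunksOK_infix ⟨Gl ++ Gm, [], by rw [hG]; simp⟩ hOK
  have hT : T = Gl.flatten ++ Gm.flatten ++ Gr.flatten := by
    conv_lhs => rw [← chunks_flatten glue T, hG]
    simp
  have hM : (T.drop (leftBlock glue T).length).take
      (T.length - (leftBlock glue T).length - (rightBlock glue T).length)
      = Gm.flatten := by
    rw [hL, hR, hT]
    have h1 : (Gl.flatten ++ Gm.flatten ++ Gr.flatten).length
        - Gl.flatten.length - Gr.flatten.length = Gm.flatten.length := by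
      simp
    rw [h1, List.append_assoc, List.drop_left, List.take_left]
  refine ⟨?_, ?_, ?_⟩
  · rw [show shrinkWith glue T = ((chunks glue T).map collapse).flatten from rfl, hG, hM,
      shrinkWith, shrinkWith, shrinkWith, hL, hR,
      chunks_of_ok hOKl, chunks_of_ok hOKm, chunks_of_ok hOKr]
    simp
  · rw [shrinkWith, hL, chunks_of_ok hOKl]; exact shrink_small hlen_l
  · rw [shrinkWith, hR, chunks_of_ok hOKr]; exact shrink_small hlen_r
end Main

/-- For every `X ∈ Σ*` and `k ≥ 0`,
`shrink_{k+1}(X̄_k) = shrink_{k+1}(L_k) · X̄_{k+1} · shrink_{k+1}(R_k)`;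
consequently `|shrink_{k+1}(X̄_k)| ≤ |X̄_{k+1}| + 2`. -/


theorem shrink_Xbar (Bs Ls Rs : ℕ → Set (UA α))
    [∀ k, DecidablePred (· ∈ Bs k)] [∀ k, DecidablePred (· ∈ Ls k)]
    [∀ k, DecidablePred (· ∈ Rs k)]
    (hdisj : ∀ k, k % 2 = 0 → Disjoint (Ls k) (Rs k))
    (X : List α) (k : ℕ) :
    shrinkK Bs Ls Rs (k + 1) (Xbar Bs Ls Rs X k)
      = shrinkK Bs Ls Rs (k + 1) (Lblk Bs Ls Rs X k) ++ Xbar Bs Ls Rs X (k + 1)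
        ++ shrinkK Bs Ls Rs (k + 1) (Rblk Bs Ls Rs X k) ∧
    (shrinkK Bs Ls Rs (k + 1) (Xbar Bs Ls Rs X k)).length
      ≤ (Xbar Bs Ls Rs X (k + 1)).length + 2 := by
  have h := shrinkWith_decomp (glueK Bs Ls Rs (k+1)) (Xbar Bs Ls Rs X k)
  have e2 : Xbar Bs Ls Rs X (k+1)
      = shrinkWith (glueK Bs Ls Rs (k+1))
        (((Xbar Bs Ls Rs X k).drop
            (leftBlock (glueK Bs Ls Rs (k+1)) (Xbar Bs Ls Rs X k)).length).take
          ((Xbar Bs Ls Rs X k).length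
            - (leftBlock (glueK Bs Ls Rs (k+1)) (Xbar Bs Ls Rs X k)).length
            - (rightBlock (glueK Bs Ls Rs (k+1)) (Xbar Bs Ls Rs X k)).length)) := rfl
  constructor
  · exact h.1
  · have hlen := congrArg List.length h.1
    rw [← e2] at hlen
    simp only [List.length_append] at hlen
    have h2 := h.2.1
    have h3 := h.2.2
    show (shrinkWith (glueK Bs Ls Rs (k+1)) (Xbar Bs Ls Rs X k)).length
      ≤ (Xbar Bs Ls Rs X (k+1)).length + 2
    omega

end IPM
end

section
/- If a nonempty string X ∈ Σ⁺ occurs in a text T ∈ Σ* at position i (i.e., T[i..i+|X|) = X), then for every k ≥ 0 with X̄_k ≠ ε there exists a position i_k such that T_k[i_k..i_k+|X̄_k|) = X̄_k and |exp(T_k[0..i_k))| = i + |exp(L_0 · L_1 ⋯ L_{k−1})|. -/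
namespace IPM

variable {α : Type} [DecidableEq α]

/-! ### Auxiliary lemmas for the proof -/

section ChunkLemmas

variable {γ : Type} {glue : γ → γ → Bool}

theorem chunks_cons_head (l : List γ) (a : γ) :
    ∃ t G, chunks glue (a :: l) = (a :: t) :: G := by
  induction l generalizing a with
  | nil => exact ⟨[], [], rfl⟩
  | cons b rest ih =>
    obtain ⟨t, G, h⟩ := ih b
    by_cases hg : glue a b
    · exact ⟨b :: t, G, by simp [chunks, h, hg]⟩
    · exact ⟨[], (b :: t) :: G, by simp [chunks, h, hg]⟩

theorem flatten_chunks (l : List γ) : (chunks glue l).flatten = l := by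
  induction l with
  | nil => rfl
  | cons a rest ih =>
    cases rest with
    | nil => rfl
    | cons b r =>
      obtain ⟨t, G, h⟩ := chunks_cons_head (glue := glue) r b
      rw [h] at ih
      by_cases hg : glue a b <;> simp [chunks, h, hg] <;> simpa using ih

theorem chunks_ne_nil_mem : ∀ {l : List γ}, ∀ C ∈ chunks glue l, C ≠ [] := by
  intro l
  induction l with
  | nil => simp [chunks]
  | cons a rest ih =>
    cases rest with
    | nil => simp [chunks]
    | cons b r =>
      obtain ⟨t, G, h⟩ := chunks_cons_head (glue := glue) r b
      rw [h] at ih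
      by_cases hg : glue a b <;> simp [chunks, h, hg] <;>
        intro C hC <;> exact ih _ (by simp [hC])

theorem chunks_chain_mem : ∀ {l : List γ}, ∀ C ∈ chunks glue l,
    List.Chain' (fun a b => glue a b = true) C := by
  intro l
  induction l with
  | nil => simp [chunks]
  | cons a rest ih =>
    cases rest with
    | nil => simp [chunks, List.Chain']
    | cons b r =>
      obtain ⟨t, G, h⟩ := chunks_cons_head (glue := glue) r b
      rw [h] at ih
      by_cases hg : glue a b
      · have e : chunks glue (a :: b :: r) = (a :: b :: t) :: G := by
          simp [chunks, h, hg]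
        rw [e]
        intro C hC
        rcases List.mem_cons.mp hC with rfl | hC
        · exact List.IsChain.cons_cons hg (ih _ (by simp))
        · exact ih _ (by simp [hC])
      · have e : chunks glue (a :: b :: r) = [a] :: (b :: t) :: G := by
          simp [chunks, h, hg]
        rw [e]
        intro C hC
        rcases List.mem_cons.mp hC with rfl | hC
        · simp [List.Chain']
        · exact ih _ hC

/-- No glue across consecutive chunk boundaries. -/
theorem chunks_chain'_noglue : ∀ {l : List γ},
    List.Chain' (fun C D => ∀ a ∈ C.getLast?, ∀ b ∈ D.head?, glue a b = false)
      (chunks glue l) := by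
  intro l
  induction l with
  | nil => simp [chunks, List.Chain']
  | cons a rest ih =>
    cases rest with
    | nil => simp [chunks, List.Chain']
    | cons b r =>
      obtain ⟨t, G, h⟩ := chunks_cons_head (glue := glue) r b
      rw [h] at ih
      by_cases hg : glue a b
      · have e : chunks glue (a :: b :: r) = (a :: b :: t) :: G := by
          simp [chunks, h, hg]
        rw [e]
        rcases List.isChain_cons.mp ih with ⟨hhd, htl⟩
        refine List.isChain_cons.mpr ⟨?_, htl⟩
        intro D hD c hc d hd
        exact hhd D hD c (by rwa [List.getLast?_cons_cons] at hc) d hd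
      · have e : chunks glue (a :: b :: r) = [a] :: (b :: t) :: G := by
          simp [chunks, h, hg]
        rw [e]
        refine List.isChain_cons.mpr ⟨?_, ih⟩
        intro D hD c hc d hd
        simp only [List.head?_cons, Option.mem_def, Option.some.injEq] at hD hc hd
        subst hD
        simp only [List.head?_cons, Option.some.injEq] at hd
        simp only [List.getLast?_singleton, Option.some.injEq] at hc
        rw [← hc, ← hd]
        simpa using hg

theorem chunks_append_s8 : ∀ (U V : List γ),
    (∀ a ∈ U.getLast?, ∀ b ∈ V.head?, glue a b = false) →
    chunks glue (U ++ V) = chunks glue U ++ chunks glue V := by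
  intro U
  induction U with
  | nil => simp [chunks]
  | cons a u ih =>
    intro V hb
    cases u with
    | nil =>
      cases V with
      | nil => simp [chunks]
      | cons b v =>
        obtain ⟨t, G, h⟩ := chunks_cons_head (glue := glue) v b
        have hg : glue a b = false := by simpa using hb a (by simp) b (by simp)
        simp [chunks, h, hg]
    | cons a' u' =>
      have h2 : ∀ c ∈ (a' :: u').getLast?, ∀ b ∈ V.head?, glue c b = false := by
        intro c hc b hbv
        exact hb c (by rw [List.getLast?_cons_cons]; exact hc) b hbv
      have ih' := ih V h2
      obtain ⟨t, G, h⟩ := chunks_cons_head (glue := glue) u' a'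
      rw [h] at ih'
      have hAV : (a :: a' :: u') ++ V = a :: a' :: (u' ++ V) := by simp
      have hmid : chunks glue (a' :: (u' ++ V)) = (a' :: t) :: (G ++ chunks glue V) := by
        have : a' :: (u' ++ V) = (a' :: u') ++ V := by simp
        rw [this, ih']; simp
      by_cases hg : glue a a'
      · rw [hAV]
        simp [chunks, hmid, hg, h]
      · rw [hAV]
        simp [chunks, hmid, hg, h]

/-- Propagating equality rightwards along a glued chain, given the left-uniqueness
property of the glue relation. -/
theorem all_eq_of_glue_into
    (H1 : ∀ a b c : γ, glue a b = true → glue b c = true → b = c)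
    {p a : γ} (hpa : glue p a = true) :
    ∀ {t : List γ}, List.Chain' (fun x y => glue x y = true) (a :: t) → ∀ y ∈ t, y = a := by
  intro t
  induction t with
  | nil => simp
  | cons b t' ih =>
    intro hch y hy
    have hab : glue a b = true := (List.isChain_cons_cons.mp hch).1
    have hba : b = a := (H1 p a b hpa hab).symm
    subst hba
    rcases List.mem_cons.mp hy with rfl | hy
    · rfl
    · exact ih (List.isChain_cons_cons.mp hch).2 y hy

/-- Propagating equality leftwards along a glued chain, given the right-uniqueness
property of the glue relation. -/
theorem all_eq_of_glue_outof
    (H2 : ∀ a b c : γ, glue b c = true → glue a b = true → a = b) {s : γ} :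
    ∀ {t : List γ} {a : γ}, List.Chain' (fun x y => glue x y = true) (a :: t) →
      glue ((a :: t).getLast (by simp)) s = true → ∀ y ∈ t, y = a := by
  intro t
  induction t with
  | nil => simp
  | cons b t' ih =>
    intro a hch hgs y hy
    have hab : glue a b = true := (List.isChain_cons_cons.mp hch).1
    have htail := (List.isChain_cons_cons.mp hch).2
    have hlast : ((a :: b :: t').getLast (by simp)) = ((b :: t').getLast (by simp)) := by
      simp [List.getLast_cons]
    rw [hlast] at hgs
    have hall : ∀ y ∈ t', y = b := ih htail hgs
    -- the last element of b :: t' equals b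
    have hlb : ((b :: t').getLast (by simp)) = b := by
      have := List.getLast_mem (l := b :: t') (by simp)
      rcases List.mem_cons.mp this with h | h
      · exact h
      · exact hall _ h
    have hba : b = a := by
      rw [hlb] at hgs
      exact (H2 a b s hgs hab).symm
    subst hba
    rcases List.mem_cons.mp hy with rfl | hy
    · rfl
    · exact hall y hy


theorem eq_nil_or_append_singleton {β : Type*} (l : List β) :
    l = [] ∨ ∃ l' a, l = l' ++ [a] := by
  rcases List.eq_nil_or_concat l with h | ⟨l', a, h⟩
  · exact Or.inl h
  · exact Or.inr ⟨l', a, by rw [h, List.concat_eq_append]⟩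

theorem flatten_getLast?_concat (Gl : List (List γ)) (D : List γ) (hD : D ≠ []) :
    ((Gl ++ [D]).flatten).getLast? = D.getLast? := by
  rw [List.flatten_append]
  simp only [List.flatten_cons, List.flatten_nil, List.append_nil]
  exact List.getLast?_append_of_ne_nil _ hD

end ChunkLemmas

section UALemmas

theorem isUniform_cons_iff (a : UA α) (t : List (UA α)) :
    isUniform (a :: t) = true ↔ ∀ y ∈ t, y = a := by
  simp [isUniform]

theorem expandStr_nil : expandStr ([] : List (UA α)) = [] := rfl

theorem expandStr_append (l₁ l₂ : List (UA α)) :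
    expandStr (l₁ ++ l₂) = expandStr l₁ ++ expandStr l₂ := by
  simp [expandStr]

theorem expandStr_collapse_of (C : List (UA α))
    (h : C.length ≤ 2 ∨ isUniform C = true) :
    expandStr (collapse C) = expandStr C := by
  match C with
  | [] => rfl
  | [a] => rfl
  | a :: b :: rest =>
    by_cases hall : (b :: rest).all (fun x => decide (x = a)) = true
    · have hrep : (a :: b :: rest).map expand = List.replicate (rest.length + 2) (expand a) := by
        rw [List.eq_replicate_iff]
        refine ⟨by simp, ?_⟩
        intro x hx
        simp only [List.all_eq_true, decide_eq_true_eq] at hall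
        simp only [List.mem_map] at hx
        obtain ⟨y, hy, rfl⟩ := hx
        rcases List.mem_cons.mp hy with rfl | hy
        · rfl
        · rw [hall y hy]
      simp only [collapse, hall, if_true]
      simp [expandStr, expand, hrep]
    · have hlen : (a :: b :: rest).length ≤ 2 := by
        rcases h with h | h
        · exact h
        · exact absurd ((isUniform_cons_iff a (b :: rest)).mp h) (by
            intro hc
            apply hall
            simp only [List.all_eq_true, decide_eq_true_eq]
            exact hc)
      have : rest = [] := by
        simp only [List.length_cons] at hlen
        cases rest with
        | nil => rfl
        | cons c r => simp at hlen
      subst this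
      simp only [collapse, hall, if_false]
      simp [expandStr, expand]

theorem chain_collapse_hyp {glue : UA α → UA α → Bool}
    (H1 : ∀ a b c : UA α, glue a b = true → glue b c = true → b = c)
    (H2 : ∀ a b c : UA α, glue b c = true → glue a b = true → a = b)
    (C : List (UA α)) (hC : List.Chain' (fun a b => glue a b = true) C) :
    C.length ≤ 2 ∨ isUniform C = true := by
  match C with
  | [] => left; simp
  | [a] => left; simp
  | [a, b] => left; simp
  | a :: b :: c :: t =>
    right
    have hab : glue a b = true := (List.isChain_cons_cons.mp hC).1
    have htl := (List.isChain_cons_cons.mp hC).2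
    have hbc : glue b c = true := (List.isChain_cons_cons.mp htl).1
    have hba : a = b := H2 a b c hbc hab
    have hall : ∀ y ∈ c :: t, y = b := all_eq_of_glue_into H1 hab htl
    rw [isUniform_cons_iff]
    intro y hy
    rcases List.mem_cons.mp hy with rfl | hy
    · exact hba.symm
    · rw [hall y hy, hba]

theorem expandStr_shrinkWith (glue : UA α → UA α → Bool)
    (H1 : ∀ a b c : UA α, glue a b = true → glue b c = true → b = c)
    (H2 : ∀ a b c : UA α, glue b c = true → glue a b = true → a = b)
    (T : List (UA α)) :
    expandStr (shrinkWith glue T) = expandStr T := by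
  have key : ∀ G : List (List (UA α)),
      (∀ C ∈ G, List.Chain' (fun a b => glue a b = true) C) →
      expandStr (G.map collapse).flatten = expandStr G.flatten := by
    intro G
    induction G with
    | nil => simp
    | cons C G' ih =>
      intro hmem
      simp only [List.map_cons, List.flatten_cons]
      rw [expandStr_append, expandStr_append]
      rw [expandStr_collapse_of C (chain_collapse_hyp H1 H2 C (hmem C (by simp)))]
      rw [ih (fun C hC => hmem C (by simp [hC]))]
  have := key (chunks glue T) (fun C hC => chunks_chain_mem C hC)
  rw [flatten_chunks] at this
  exact this

/-- Left trimming: the chunks of `P ++ X ++ S` split cleanly after `P ++ leftBlock X`. -/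
theorem ltrim (glue : UA α → UA α → Bool)
    (H1 : ∀ a b c : UA α, glue a b = true → glue b c = true → b = c)
    (P X S : List (UA α)) (hXne : X ≠ [])
    (hYne : X.drop (leftBlock glue X).length ≠ []) :
    chunks glue (P ++ X ++ S)
      = chunks glue (P ++ leftBlock glue X)
        ++ chunks glue (X.drop (leftBlock glue X).length ++ S) := by
  obtain ⟨x, xs, rfl⟩ : ∃ x xs, X = x :: xs := by
    cases X with
    | nil => exact absurd rfl hXne
    | cons x xs => exact ⟨x, xs, rfl⟩
  obtain ⟨t, G, h⟩ := chunks_cons_head (glue := glue) xs x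
  have hflat : x :: xs = (x :: t) ++ G.flatten := by
    conv_lhs => rw [← flatten_chunks (glue := glue) (x :: xs)]
    rw [h]; simp
  by_cases hu : isUniform (x :: t) = true
  · have hL : leftBlock glue (x :: xs) = x :: t := by
      simp [leftBlock, h, hu]
    rw [hL]
    have hY : (x :: xs).drop (x :: t).length = G.flatten := by
      rw [hflat]; exact List.drop_left
    rw [hL] at hYne
    rw [hY] at hYne ⊢
    obtain ⟨C2, G', rfl⟩ : ∃ C2 G', G = C2 :: G' := by
      cases G with
      | nil => simp at hYne
      | cons c g => exact ⟨c, g, rfl⟩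
    have hC2ne : C2 ≠ [] := chunks_ne_nil_mem _ (by rw [h]; simp)
    have hng := chunks_chain'_noglue (glue := glue) (l := x :: xs)
    rw [h] at hng
    have hbound := (List.isChain_cons.mp hng).1 C2 (by simp)
    have hstr : P ++ (x :: xs) ++ S = (P ++ (x :: t)) ++ ((C2 :: G').flatten ++ S) := by
      rw [hflat]; simp
    rw [hstr, chunks_append_s8]
    intro a ha b hb
    rw [List.getLast?_append_of_ne_nil _ (by simp : (x :: t) ≠ [])] at ha
    have hb' : b ∈ C2.head? := by
      have e : (C2 :: G').flatten ++ S = C2 ++ (G'.flatten ++ S) := by simp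
      rw [e, List.head?_append_of_ne_nil _ hC2ne] at hb
      exact hb
    exact hbound a ha b hb'
  · have hL : leftBlock glue (x :: xs) = [] := by
      simp [leftBlock, h, hu]
    rw [hL]
    simp only [List.length_nil, List.drop_zero, List.append_nil]
    have hbound : ∀ a ∈ P.getLast?, ∀ b ∈ ((x :: xs) ++ S).head?, glue a b = false := by
      intro a ha b hb
      rw [List.head?_append_of_ne_nil _ (by simp : x :: xs ≠ [])] at hb
      simp only [List.head?_cons, Option.mem_def, Option.some.injEq] at hb
      subst hb
      by_contra hgl
      simp only [Bool.not_eq_false] at hgl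
      have hch := chunks_chain_mem (glue := glue) (x :: t) (by rw [h]; simp)
      have := all_eq_of_glue_into H1 hgl hch
      exact absurd ((isUniform_cons_iff x t).mpr this) (by simpa using hu)
    rw [show P ++ (x :: xs) ++ S = P ++ ((x :: xs) ++ S) by simp,
      chunks_append_s8 _ _ hbound]

/-- Right trimming: the chunks of `Y ++ S` split cleanly before `rightBlock X ++ S`,
where `Y` is `X` with `leftBlock X` removed. -/
theorem rtrim (glue : UA α → UA α → Bool)
    (H2 : ∀ a b c : UA α, glue b c = true → glue a b = true → a = b)
    (X S : List (UA α)) (hXne : X ≠ [])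
    (hX'ne : (X.drop (leftBlock glue X).length).take
        (X.length - (leftBlock glue X).length - (rightBlock glue X).length) ≠ []) :
    chunks glue (X.drop (leftBlock glue X).length ++ S)
      = chunks glue ((X.drop (leftBlock glue X).length).take
            (X.length - (leftBlock glue X).length - (rightBlock glue X).length))
        ++ chunks glue (rightBlock glue X ++ S) := by
  obtain ⟨x, xs, rfl⟩ : ∃ x xs, X = x :: xs := by
    cases X with
    | nil => exact absurd rfl hXne
    | cons x xs => exact ⟨x, xs, rfl⟩
  obtain ⟨t, G, h⟩ := chunks_cons_head (glue := glue) xs x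
  have hflat : x :: xs = (x :: t) ++ G.flatten := by
    conv_lhs => rw [← flatten_chunks (glue := glue) (x :: xs)]
    rw [h]; simp
  -- the uniform-contradiction helper for the right end
  have hRuni : ∀ (C : List (UA α)), C ∈ chunks glue (x :: xs) →
      (∀ a ∈ C.getLast?, ∀ b ∈ S.head?, glue a b = false) ∨ isUniform C = true := by
    intro C hC
    by_cases hg : ∀ a ∈ C.getLast?, ∀ b ∈ S.head?, glue a b = false
    · exact Or.inl hg
    · right
      push_neg at hg
      obtain ⟨a, ha, b, hb, hgl⟩ := hg
      simp only [Bool.not_eq_false] at hgl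
      obtain ⟨c, t', rfl⟩ : ∃ c t', C = c :: t' := by
        have := chunks_ne_nil_mem C hC
        cases C with
        | nil => exact absurd rfl this
        | cons c t' => exact ⟨c, t', rfl⟩
      have hch := chunks_chain_mem (glue := glue) _ hC
      have hlast : (c :: t').getLast (by simp) = a := by
        have := List.getLast?_eq_getLast (l := c :: t') (by simp)
        rw [this] at ha
        simpa using ha
      rw [isUniform_cons_iff]
      exact all_eq_of_glue_outof H2 hch (by rw [hlast]; exact hgl)
  by_cases hu : isUniform (x :: t) = true
  · -- leftBlock is the first chunk
    have hL : leftBlock glue (x :: xs) = x :: t := by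
      simp [leftBlock, h, hu]
    rw [hL] at hX'ne ⊢
    have hY : (x :: xs).drop (x :: t).length = G.flatten := by
      rw [hflat]; exact List.drop_left
    rw [hY] at hX'ne ⊢
    rcases eq_nil_or_append_singleton G with rfl | ⟨G₀, Cn, rfl⟩
    · simp at hX'ne
    · have hCn_ne : Cn ≠ [] := chunks_ne_nil_mem _ (by rw [h]; simp)
      have hlenX : (x :: xs).length = (x :: t).length + G₀.flatten.length + Cn.length := by
        rw [hflat]
        simp only [List.length_append, List.length_cons, List.flatten_append,
          List.flatten_cons, List.flatten_nil, List.append_nil]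
        omega
      have hgld : ((x :: t) :: (G₀ ++ [Cn])).getLastD [] = Cn := by
        rw [show (x :: t) :: (G₀ ++ [Cn]) = ((x :: t) :: G₀) ++ [Cn] by simp,
          List.getLastD_eq_getLast?, List.getLast?_concat]
        rfl
      have hlen2 : ¬ ((x :: t) :: (G₀ ++ [Cn])).length ≤ 1 := by simp
      by_cases hun : isUniform Cn = true
      · have hR : rightBlock glue (x :: xs) = Cn := by
          simp only [rightBlock, h, hgld, hun, if_true, hlen2, if_false]
        rw [hR] at hX'ne ⊢
        have harith : (x :: xs).length - (x :: t).length - Cn.length = G₀.flatten.length := by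
          omega
        rw [harith] at hX'ne ⊢
        have hfl : (G₀ ++ [Cn]).flatten = G₀.flatten ++ Cn := by simp
        rw [hfl] at hX'ne ⊢
        rw [List.take_left] at hX'ne ⊢
        obtain ⟨G₁, D, rfl⟩ : ∃ G₁ D, G₀ = G₁ ++ [D] := by
          rcases eq_nil_or_append_singleton G₀ with rfl | ⟨G₁, D, rfl⟩
          · simp at hX'ne
          · exact ⟨G₁, D, rfl⟩
        have hD_ne : D ≠ [] := chunks_ne_nil_mem _ (by rw [h]; simp)
        have hng := chunks_chain'_noglue (glue := glue) (l := x :: xs)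
        rw [h, show (x :: t) :: ((G₁ ++ [D]) ++ [Cn]) = ((x :: t) :: (G₁ ++ [D])) ++ [Cn] by simp]
          at hng
        have hbound := (List.isChain_append.mp hng).2.2
        have hgl2 : ((x :: t) :: (G₁ ++ [D])).getLast? = some D := by
          rw [show (x :: t) :: (G₁ ++ [D]) = ((x :: t) :: G₁) ++ [D] by simp,
            List.getLast?_concat]
        rw [show (G₁ ++ [D]).flatten ++ Cn ++ S = (G₁ ++ [D]).flatten ++ (Cn ++ S) by simp,
          chunks_append_s8]
        intro a ha b hb
        rw [flatten_getLast?_concat _ _ hD_ne] at ha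
        rw [List.head?_append_of_ne_nil _ hCn_ne] at hb
        exact hbound D (by rw [hgl2]; rfl) Cn (by simp) a ha b hb
      · have hR : rightBlock glue (x :: xs) = [] := by
          simp only [rightBlock, h, hgld, hun, if_false, hlen2]
          simp
        rw [hR] at hX'ne ⊢
        have harith : (x :: xs).length - (x :: t).length - ([] : List (UA α)).length
            = (G₀ ++ [Cn]).flatten.length := by
          have : (G₀ ++ [Cn]).flatten.length = G₀.flatten.length + Cn.length := by
            simp only [List.flatten_append, List.flatten_cons, List.flatten_nil,
              List.append_nil, List.length_append]
          rw [this]; simp only [List.length_nil, Nat.sub_zero]; omega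
        rw [harith, List.take_length] at hX'ne ⊢
        rcases hRuni Cn (by rw [h]; simp) with hbnd | hcontra
        · rw [show (G₀ ++ [Cn]).flatten ++ S = (G₀ ++ [Cn]).flatten ++ ([] ++ S) by simp,
            chunks_append_s8]
          intro a ha b hb
          rw [flatten_getLast?_concat _ _ hCn_ne] at ha
          simp only [List.nil_append] at hb
          exact hbnd a ha b hb
        · exact absurd hcontra (by simpa using hun)
  · -- leftBlock is empty
    have hL : leftBlock glue (x :: xs) = [] := by
      simp [leftBlock, h, hu]
    rw [hL] at hX'ne ⊢
    simp only [List.length_nil, List.drop_zero, Nat.sub_zero] at hX'ne ⊢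
    rcases eq_nil_or_append_singleton G with rfl | ⟨G₀, Cn, rfl⟩
    · -- single chunk, non-uniform
      have hXeq : x :: xs = x :: t := by rw [hflat]; simp
      have hR : rightBlock glue (x :: xs) = [] := by
        simp [rightBlock, h]
      rw [hR] at hX'ne ⊢
      simp only [List.length_nil, Nat.sub_zero] at hX'ne ⊢
      rw [List.take_length] at hX'ne ⊢
      rcases hRuni (x :: t) (by rw [h]; simp) with hbnd | hcontra
      · rw [show (x :: xs) ++ S = (x :: xs) ++ ([] ++ S) by simp, chunks_append_s8]
        intro a ha b hb
        rw [hXeq] at ha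
        simp only [List.nil_append] at hb
        exact hbnd a ha b hb
      · exact absurd hcontra (by simpa using hu)
    · have hCn_ne : Cn ≠ [] := chunks_ne_nil_mem _ (by rw [h]; simp)
      have hlenX : (x :: xs).length = (x :: t).length + G₀.flatten.length + Cn.length := by
        rw [hflat]
        simp only [List.length_append, List.length_cons, List.flatten_append,
          List.flatten_cons, List.flatten_nil, List.append_nil]
        omega
      have hgld : ((x :: t) :: (G₀ ++ [Cn])).getLastD [] = Cn := by
        rw [show (x :: t) :: (G₀ ++ [Cn]) = ((x :: t) :: G₀) ++ [Cn] by simp,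
          List.getLastD_eq_getLast?, List.getLast?_concat]
        rfl
      have hlen2 : ¬ ((x :: t) :: (G₀ ++ [Cn])).length ≤ 1 := by simp
      have hXeq : x :: xs = ((x :: t) ++ G₀.flatten) ++ Cn := by rw [hflat]; simp
      by_cases hun : isUniform Cn = true
      · have hR : rightBlock glue (x :: xs) = Cn := by
          simp only [rightBlock, h, hgld, hun, if_true, hlen2, if_false]
        rw [hR] at hX'ne ⊢
        have harith : (x :: xs).length - Cn.length = ((x :: t) ++ G₀.flatten).length := by
          simp only [List.length_append]; omega
        rw [harith] at hX'ne ⊢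
        rw [hXeq, List.take_left] at hX'ne ⊢
        have hng := chunks_chain'_noglue (glue := glue) (l := x :: xs)
        rw [h, show (x :: t) :: (G₀ ++ [Cn]) = ((x :: t) :: G₀) ++ [Cn] by simp] at hng
        have hbound := (List.isChain_append.mp hng).2.2
        obtain ⟨M₀, D, hM⟩ : ∃ M₀ D, (x :: t) :: G₀ = M₀ ++ [D] := by
          rcases eq_nil_or_append_singleton ((x :: t) :: G₀) with he | ⟨M₀, D, hM⟩
          · simp at he
          · exact ⟨M₀, D, hM⟩
        have hD_ne : D ≠ [] := by
          apply chunks_ne_nil_mem (glue := glue) (l := x :: xs)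
          rw [h, show (x :: t) :: (G₀ ++ [Cn]) = ((x :: t) :: G₀) ++ [Cn] by simp, hM]
          simp
        have hfl2 : (x :: t) ++ G₀.flatten = ((x :: t) :: G₀).flatten := by simp
        rw [show ((x :: t) ++ G₀.flatten) ++ Cn ++ S
            = ((x :: t) ++ G₀.flatten) ++ (Cn ++ S) by simp, chunks_append_s8]
        intro a ha b hb
        rw [hfl2, hM, flatten_getLast?_concat _ _ hD_ne] at ha
        rw [List.head?_append_of_ne_nil _ hCn_ne] at hb
        exact hbound D (by rw [hM, List.getLast?_concat]; rfl) Cn (by simp) a ha b hb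
      · have hR : rightBlock glue (x :: xs) = [] := by
          simp only [rightBlock, h, hgld, hun, if_false, hlen2]
          simp
        rw [hR] at hX'ne ⊢
        simp only [List.length_nil, Nat.sub_zero] at hX'ne ⊢
        rw [List.take_length] at hX'ne ⊢
        rcases hRuni Cn (by rw [h]; simp) with hbnd | hcontra
        · rw [show (x :: xs) ++ S = (x :: xs) ++ ([] ++ S) by simp, chunks_append_s8]
          intro a ha b hb
          rw [hXeq, List.getLast?_append_of_ne_nil _ hCn_ne] at ha
          simp only [List.nil_append] at hb
          exact hbnd a ha b hb
        · exact absurd hcontra (by simpa using hun)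


end UALemmas


theorem expandStr_map_sym (l : List α) : expandStr (l.map UA.sym) = l := by
  induction l with
  | nil => rfl
  | cons a l ih => simp [expandStr, expand] at ih ⊢; exact ih

/-- If a nonempty `X ∈ Σ⁺` occurs in a text `T ∈ Σ*` at position `i`,
then for every `k ≥ 0` with `X̄_k ≠ ε` there is a position `i_k` such that
`T_k[i_k..i_k+|X̄_k|) = X̄_k` and `|exp(T_k[0..i_k))| = i + |exp(L_0 ⋯ L_{k−1})|`. -/
theorem occurrence_transfers (Bs Ls Rs : ℕ → Set (UA α))
    [∀ k, DecidablePred (· ∈ Bs k)] [∀ k, DecidablePred (· ∈ Ls k)]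
    [∀ k, DecidablePred (· ∈ Rs k)]
    (hdisj : ∀ k, k % 2 = 0 → Disjoint (Ls k) (Rs k))
    (T X : List α) (hX : X ≠ []) (i : ℕ)
    (hocc : i + X.length ≤ T.length ∧ (T.drop i).take X.length = X)
    (k : ℕ) (hk : Xbar Bs Ls Rs X k ≠ []) :
    ∃ ik : ℕ,
      ik + (Xbar Bs Ls Rs X k).length ≤ (Tseq Bs Ls Rs T k).length ∧
      ((Tseq Bs Ls Rs T k).drop ik).take (Xbar Bs Ls Rs X k).length
        = Xbar Bs Ls Rs X k ∧
      (expandStr ((Tseq Bs Ls Rs T k).take ik)).length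
        = i + (expandStr (((List.range k).map (Lblk Bs Ls Rs X)).flatten)).length := by
  induction k with
  | zero =>
    have h1 : 1 ≤ X.length := by
      cases X with
      | nil => exact absurd rfl hX
      | cons a l => simp
    refine ⟨i, ?_, ?_, ?_⟩
    · simpa [Tseq, Xbar] using hocc.1
    · show ((T.map UA.sym).drop i).take (X.map UA.sym).length = X.map UA.sym
      simp only [List.length_map]
      rw [← List.map_drop, ← List.map_take, hocc.2]
    · show (expandStr ((T.map UA.sym).take i)).length = _
      rw [← List.map_take, expandStr_map_sym]
      have hlen : (T.take i).length = i := by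
        rw [List.length_take]
        have := hocc.1
        omega
      simp [hlen, expandStr_nil]
  | succ k ih =>
    have H1 : ∀ a b c : UA α, glueK Bs Ls Rs (k+1) a b = true →
        glueK Bs Ls Rs (k+1) b c = true → b = c := by
      intro a b c hab hbc
      rcases Nat.mod_two_eq_zero_or_one (k+1) with hp | hp
      · simp only [glueK, hp, if_neg, Nat.zero_ne_one, if_false, pcGlue,
          decide_eq_true_eq] at hab hbc
        exact absurd hab.2 (Set.disjoint_left.mp (hdisj (k+1) hp) hbc.1)
      · simp only [glueK, hp, if_pos, rleGlue, decide_eq_true_eq] at hab hbc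
        exact hbc.1
    have H2 : ∀ a b c : UA α, glueK Bs Ls Rs (k+1) b c = true →
        glueK Bs Ls Rs (k+1) a b = true → a = b := by
      intro a b c hbc hab
      rcases Nat.mod_two_eq_zero_or_one (k+1) with hp | hp
      · simp only [glueK, hp, if_neg, Nat.zero_ne_one, if_false, pcGlue,
          decide_eq_true_eq] at hab hbc
        exact absurd hab.2 (Set.disjoint_left.mp (hdisj (k+1) hp) hbc.1)
      · simp only [glueK, hp, if_pos, rleGlue, decide_eq_true_eq] at hab hbc
        exact hab.1
    have hXbar1 : Xbar Bs Ls Rs X (k+1)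
        = shrinkWith (glueK Bs Ls Rs (k+1))
            (((Xbar Bs Ls Rs X k).drop (leftBlock (glueK Bs Ls Rs (k+1)) (Xbar Bs Ls Rs X k)).length).take
              ((Xbar Bs Ls Rs X k).length
                - (leftBlock (glueK Bs Ls Rs (k+1)) (Xbar Bs Ls Rs X k)).length
                - (rightBlock (glueK Bs Ls Rs (k+1)) (Xbar Bs Ls Rs X k)).length)) := rfl
    have hX'ne : (((Xbar Bs Ls Rs X k).drop (leftBlock (glueK Bs Ls Rs (k+1)) (Xbar Bs Ls Rs X k)).length).take
              ((Xbar Bs Ls Rs X k).length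
                - (leftBlock (glueK Bs Ls Rs (k+1)) (Xbar Bs Ls Rs X k)).length
                - (rightBlock (glueK Bs Ls Rs (k+1)) (Xbar Bs Ls Rs X k)).length)) ≠ [] := by
      intro h0
      apply hk
      rw [hXbar1, h0]
      rfl
    have hXbne : Xbar Bs Ls Rs X k ≠ [] := by
      intro h0
      apply hX'ne
      rw [h0]
      simp
    have hYne : (Xbar Bs Ls Rs X k).drop
        (leftBlock (glueK Bs Ls Rs (k+1)) (Xbar Bs Ls Rs X k)).length ≠ [] := by
      intro h0
      apply hX'ne
      rw [h0]
      simp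
    obtain ⟨ik, hlen, hocc2, hexp⟩ := ih hXbne
    have hsplit : Tseq Bs Ls Rs T k
        = (Tseq Bs Ls Rs T k).take ik ++ Xbar Bs Ls Rs X k
          ++ (Tseq Bs Ls Rs T k).drop (ik + (Xbar Bs Ls Rs X k).length) := by
      have h2 : (Tseq Bs Ls Rs T k).drop ik
          = Xbar Bs Ls Rs X k ++ (Tseq Bs Ls Rs T k).drop (ik + (Xbar Bs Ls Rs X k).length) := by
        conv_lhs => rw [← List.take_append_drop (Xbar Bs Ls Rs X k).length
          ((Tseq Bs Ls Rs T k).drop ik)]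
        rw [hocc2, List.drop_drop, Nat.add_comm]
      conv_lhs => rw [← List.take_append_drop ik (Tseq Bs Ls Rs T k), h2]
      simp
    have hT1 : Tseq Bs Ls Rs T (k+1)
        = shrinkWith (glueK Bs Ls Rs (k+1))
            ((Tseq Bs Ls Rs T k).take ik ++ Xbar Bs Ls Rs X k
              ++ (Tseq Bs Ls Rs T k).drop (ik + (Xbar Bs Ls Rs X k).length)) := by
      conv_lhs => rw [show Tseq Bs Ls Rs T (k+1)
        = shrinkWith (glueK Bs Ls Rs (k+1)) (Tseq Bs Ls Rs T k) from rfl, hsplit]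
    have hchunks := ltrim (glueK Bs Ls Rs (k+1)) H1
      ((Tseq Bs Ls Rs T k).take ik) (Xbar Bs Ls Rs X k)
      ((Tseq Bs Ls Rs T k).drop (ik + (Xbar Bs Ls Rs X k).length)) hXbne hYne
    have hchunks2 := rtrim (glueK Bs Ls Rs (k+1)) H2 (Xbar Bs Ls Rs X k)
      ((Tseq Bs Ls Rs T k).drop (ik + (Xbar Bs Ls Rs X k).length)) hXbne hX'ne
    rw [hchunks2] at hchunks
    have hshr : Tseq Bs Ls Rs T (k+1)
        = shrinkWith (glueK Bs Ls Rs (k+1))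
            ((Tseq Bs Ls Rs T k).take ik ++ leftBlock (glueK Bs Ls Rs (k+1)) (Xbar Bs Ls Rs X k))
          ++ (Xbar Bs Ls Rs X (k+1)
          ++ shrinkWith (glueK Bs Ls Rs (k+1))
            (rightBlock (glueK Bs Ls Rs (k+1)) (Xbar Bs Ls Rs X k)
              ++ (Tseq Bs Ls Rs T k).drop (ik + (Xbar Bs Ls Rs X k).length))) := by
      rw [hT1, hXbar1]
      show ((chunks _ _).map collapse).flatten = _
      rw [hchunks]
      simp [shrinkWith, List.map_append, List.flatten_append]
    refine ⟨(shrinkWith (glueK Bs Ls Rs (k+1))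
      ((Tseq Bs Ls Rs T k).take ik ++ leftBlock (glueK Bs Ls Rs (k+1)) (Xbar Bs Ls Rs X k))).length,
      ?_, ?_, ?_⟩
    · rw [hshr]
      simp only [List.length_append]
      omega
    · rw [hshr, List.drop_left, List.take_left]
    · rw [hshr, List.take_left, expandStr_shrinkWith _ H1 H2, expandStr_append]
      rw [List.range_succ, List.map_append, List.flatten_append, expandStr_append]
      simp only [List.length_append]
      rw [hexp]
      have hLb : Lblk Bs Ls Rs X k = leftBlock (glueK Bs Ls Rs (k+1)) (Xbar Bs Ls Rs X k) := rfl
      simp only [List.map_cons, List.map_nil, List.flatten_cons, List.flatten_nil,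
        List.append_nil, hLb]
      omega

end IPM
end

section
/- For all nonempty strings P and S over an alphabet Σ, there exists a family of at most min(|rle(S)|, ⌊|S|/|P|⌋) arithmetic progressions of integers, each with common difference at most |P| (a singleton counting as a progression), whose union equals Occ(P,S) = {i ∈ [0..|S|−|P|] : S[i..i+|P|) = P}. -/
set_option linter.unusedSectionVars false
set_option maxHeartbeats 1000000

namespace IPM

variable {β : Type} [DecidableEq β]

/-- `p` is an occurrence of `P` in `S`. -/
def Occ (P S : List β) (p : ℕ) : Prop :=
  p + P.length ≤ S.length ∧ ∀ j < P.length, S[p+j]? = P[j]?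

lemma occ_iff (P S : List β) (p : ℕ) :
    (p + P.length ≤ S.length ∧ (S.drop p).take P.length = P) ↔ Occ P S p := by
  constructor
  · rintro ⟨h1, h2⟩
    refine ⟨h1, fun j hj => ?_⟩
    have := congrArg (fun l => l[j]?) h2
    simpa [List.getElem?_take, hj, List.getElem?_drop] using this
  · rintro ⟨h1, h2⟩
    refine ⟨h1, List.ext_getElem? fun j => ?_⟩
    by_cases hj : j < P.length
    · simpa [List.getElem?_take, hj, List.getElem?_drop] using h2 j hj
    · rw [List.getElem?_take]
      simp only [hj, if_false]
      exact (List.getElem?_eq_none (by omega)).symm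

/-- `P` has period `g`. -/
def PerP (P : List β) (g : ℕ) : Prop := ∀ j, j + g < P.length → P[j]? = P[j+g]?

lemma perP_of_occ {P S : List β} {p d : ℕ} (h1 : Occ P S p) (h2 : Occ P S (p+d)) :
    PerP P d := by
  intro j hj
  have e1 := h1.2 (j+d) hj
  have e2 := h2.2 j (by omega)
  rw [show p + d + j = p + (j + d) by omega] at e2
  rw [← e1, ← e2]

lemma perP_iterate {P : List β} {g : ℕ} (hg : PerP P g) :
    ∀ k i j, j - i ≤ k → i ≤ j → j < P.length → g ∣ (j - i) → P[i]? = P[j]? := by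
  intro k
  induction k with
  | zero => intro i j h1 h2 _ _; rw [show i = j by omega]
  | succ k ih =>
    intro i j h1 h2 h3 h4
    rcases Nat.eq_or_lt_of_le h2 with h | h
    · rw [h]
    · have hg0 : 0 < g := by
        rcases Nat.eq_zero_or_pos g with h0 | h0
        · exfalso; rw [h0] at h4; have := Nat.eq_zero_of_zero_dvd h4; omega
        · exact h0
      have hgle : g ≤ j - i := Nat.le_of_dvd (by omega) h4
      have step : P[i]? = P[i+g]? := hg i (by omega)
      rw [step]
      exact ih (i+g) j (by omega) (by omega) h3 (by
        have : j - (i + g) = (j - i) - g := by omega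
        rw [this]; exact Nat.dvd_sub h4 dvd_rfl)

lemma perP_sub {P : List β} {a b : ℕ} (ha : PerP P a) (hb : PerP P b)
    (hab : a ≤ b) (hm : a + b ≤ P.length) : PerP P (b - a) := by
  intro j hj
  by_cases h : j + b < P.length
  · have h1 : P[j]? = P[j+b]? := hb j h
    have h2 : P[j + b - a]? = P[(j+b-a)+a]? := ha _ (by omega)
    rw [show (j + b - a) + a = j + b by omega] at h2
    rw [show j + (b - a) = j + b - a by omega]
    rw [h1, ← h2]
  · have h1 : P[j-a]? = P[(j-a)+a]? := ha _ (by omega)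
    have h2 : P[j-a]? = P[(j-a)+b]? := hb _ (by omega)
    rw [show (j-a)+a = j by omega] at h1
    rw [show (j-a)+b = j + (b-a) by omega] at h2
    rw [← h1, h2]

lemma fine_wilf {P : List β} :
    ∀ N a b, a + b ≤ N → PerP P a → PerP P b → a + b ≤ P.length →
      PerP P (Nat.gcd a b) := by
  intro N
  induction N with
  | zero =>
    intro a b hN ha hb _
    have ha0 : a = 0 := by omega
    have hb0 : b = 0 := by omega
    subst ha0; subst hb0
    intro j hj; rw [Nat.gcd_zero_left]; rfl
  | succ N ih =>
    intro a b hN ha hb hm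
    rcases Nat.eq_zero_or_pos a with ha0 | ha0
    · subst ha0; rw [Nat.gcd_zero_left]; exact hb
    rcases Nat.eq_zero_or_pos b with hb0 | hb0
    · subst hb0; rw [Nat.gcd_zero_right]; exact ha
    by_cases hab : a ≤ b
    · have hsub : PerP P (b - a) := perP_sub ha hb hab hm
      have := ih a (b - a) (by omega) ha hsub (by omega)
      rwa [Nat.gcd_sub_self_right hab] at this
    · have hba : b ≤ a := by omega
      have hsub : PerP P (a - b) := perP_sub hb ha hba (by omega)
      have := ih b (a - b) (by omega) hb hsub (by omega)
      rwa [Nat.gcd_sub_self_right hba, Nat.gcd_comm] at this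

lemma occ_shift {P S : List β} {q e g : ℕ} (h1 : Occ P S q) (h2 : Occ P S (q+e))
    (hper : PerP P g) (hdvd : g ∣ e) (hg : 0 < g) (hge : g ≤ e) (hem : e ≤ P.length) :
    Occ P S (q+g) := by
  obtain ⟨hl1, hv1⟩ := h1
  obtain ⟨hl2, hv2⟩ := h2
  refine ⟨by omega, fun j hj => ?_⟩
  by_cases h : g + j < P.length
  · have e1 := hv1 (g+j) h
    rw [show q + g + j = q + (g + j) by omega, e1]
    exact (perP_iterate hper (g+j) j (g+j) (by omega) (by omega) h (by
      simpa [show g + j - j = g by omega] using dvd_rfl)).symm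
  · have e2 := hv2 (g + j - e) (by omega)
    rw [show q + g + j = q + e + (g + j - e) by omega, e2]
    refine perP_iterate hper j (g + j - e) j (by omega) (by omega) (by omega) ?_
    rw [show j - (g + j - e) = e - g by omega]
    exact Nat.dvd_sub hdvd dvd_rfl

lemma no_small_break {P S : List β} {p d d' : ℕ}
    (h1 : Occ P S p) (h2 : Occ P S (p+d)) (h3 : Occ P S (p+d+d'))
    (hd : 0 < d) (hd' : 0 < d') (hne : d ≠ d') (hsum : d + d' ≤ P.length) :
    ∃ c, Occ P S c ∧ ((p < c ∧ c < p + d) ∨ (p + d < c ∧ c < p + d + d')) := by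
  have hpd : PerP P d := perP_of_occ h1 h2
  have hpd' : PerP P d' := perP_of_occ h2 h3
  have hper : PerP P (Nat.gcd d d') := fine_wilf (d+d') d d' le_rfl hpd hpd' hsum
  have hgd : Nat.gcd d d' ∣ d := Nat.gcd_dvd_left d d'
  have hgd' : Nat.gcd d d' ∣ d' := Nat.gcd_dvd_right d d'
  have hg0 : 0 < Nat.gcd d d' := Nat.gcd_pos_of_pos_left d' hd
  have hgled' : Nat.gcd d d' ≤ d' := Nat.le_of_dvd hd' hgd'
  rcases Nat.lt_or_ge (Nat.gcd d d') d' with hlt | hge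
  · have hocc : Occ P S (p + d + Nat.gcd d d') :=
      occ_shift h2 h3 hper hgd' hg0 hgled' (by omega)
    exact ⟨p + d + Nat.gcd d d', hocc, Or.inr ⟨by omega, by omega⟩⟩
  · have heq : Nat.gcd d d' = d' := by omega
    have hd'd : d' ∣ d := heq ▸ hgd
    have hd'led : d' ≤ d := Nat.le_of_dvd hd hd'd
    have hd'ltd : d' < d := lt_of_le_of_ne hd'led (Ne.symm hne)
    have hocc : Occ P S (p + Nat.gcd d d') :=
      occ_shift h1 h2 hper hgd hg0 (Nat.le_of_dvd hd hgd) (by omega)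
    exact ⟨p + Nat.gcd d d', hocc, Or.inl ⟨by omega, by omega⟩⟩

lemma occ_succ_of_flat {P S : List β} {q r : ℕ} (h1 : Occ P S q) (h2 : Occ P S r)
    (hqr : q < r) (hflat : ∀ j, q ≤ j → j < r → S[j]? = S[j+1]?) :
    Occ P S (q+1) := by
  obtain ⟨hl1, hv1⟩ := h1
  obtain ⟨hl2, hv2⟩ := h2
  have per1 : PerP P 1 := by
    intro i
    induction i using Nat.strong_induction_on with
    | _ i ihi =>
      intro hi
      by_cases h : q + i < r
      · rw [← hv1 i (by omega), ← hv1 (i+1) (by omega)]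
        rw [show q + (i+1) = (q + i) + 1 by omega]
        exact hflat (q+i) (by omega) h
      · have hD : r - q ≤ i := by omega
        have e1 : P[i]? = P[i - (r-q)]? := by
          rw [← hv1 i (by omega), show q + i = r + (i - (r - q)) by omega,
            hv2 _ (by omega)]
        have e2 : P[i+1]? = P[(i - (r-q)) + 1]? := by
          rw [← hv1 (i+1) (by omega), show q + (i+1) = r + ((i - (r - q)) + 1) by omega,
            hv2 _ (by omega)]
        rw [e1, e2]
        exact ihi (i - (r-q)) (by omega) (by omega)
  refine ⟨by omega, fun j hj => ?_⟩
  by_cases h : q + j < r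
  · rw [show q + 1 + j = (q + j) + 1 by omega, ← hflat (q+j) (by omega) h]
    exact hv1 j hj
  · rw [show q + 1 + j = r + (q + 1 + j - r) by omega, hv2 _ (by omega)]
    exact perP_iterate per1 j (q + 1 + j - r) j (by omega) (by omega) (by omega)
      (Nat.one_dvd _)

/-- adjacent occurrences -/
def Betw (P S : List β) (a b : ℕ) : Prop := a < b ∧ ∀ c, a < c → c < b → ¬ Occ P S c

/-- separation of consecutive chain starts -/
def Sep (P S : List β) (a b : ℕ) : Prop :=
  a + P.length ≤ b ∧ ∃ j, a ≤ j ∧ j < b ∧ S[j]? ≠ S[j+1]?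

lemma descent_of_gap {P S : List β} {x y s r : ℕ} (hx : Occ P S x) (hy : Occ P S y)
    (hB : Betw P S x y) (h2 : x + 2 ≤ y) (hs : s ≤ x) (hr : y ≤ r) :
    ∃ j, s ≤ j ∧ j < r ∧ S[j]? ≠ S[j+1]? := by
  by_contra hno
  push_neg at hno
  have hocc : Occ P S (x+1) :=
    occ_succ_of_flat hx hy hB.1 (fun j hj1 hj2 => hno j (by omega) (by omega))
  exact hB.2 (x+1) (by omega) (by omega) hocc

lemma go {P S : List β} (hm : 0 < P.length) :
    ∀ (L : List ℕ) (s d l : ℕ),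
    L.Chain' (Betw P S) → (∀ x ∈ L, Occ P S x) → d ≤ P.length →
    (∀ j, j ≤ l → Occ P S (s + j * d)) →
    (l = 0 ∨ (1 ≤ d ∧ Betw P S s (s + d) ∧ Betw P S (s + (l-1) * d) (s + l * d))) →
    (∀ r ∈ L.head?, Betw P S (s + l * d) r) →
    ∃ aps : List (ℕ × ℕ × ℕ),
      aps.head?.map Prod.fst = some s ∧
      (∀ ap ∈ aps, ap.2.1 ≤ P.length) ∧
      (∀ p : ℕ, ((∃ j, j ≤ l ∧ p = s + j * d) ∨ p ∈ L) ↔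
        ∃ ap ∈ aps, ∃ j < ap.2.2, p = ap.1 + j * ap.2.1) ∧
      (aps.map Prod.fst).Chain' (Sep P S) ∧
      (∀ x ∈ aps.map Prod.fst, Occ P S x) := by
  intro L
  induction L with
  | nil =>
    intro s d l _ _ hdm hch _ _
    refine ⟨[(s, d, l+1)], rfl, ?_, ?_, ?_, ?_⟩
    · intro ap hap
      have : ap = (s, d, l+1) := by simpa using hap
      subst this; exact hdm
    · intro p
      constructor
      · rintro (⟨j, hj, rfl⟩ | h)
        · exact ⟨(s,d,l+1), by simp, j, Nat.lt_succ_of_le hj, rfl⟩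
        · simp at h
      · rintro ⟨ap, hap, j, hj, rfl⟩
        have : ap = (s, d, l+1) := by simpa using hap
        subst this
        exact Or.inl ⟨j, Nat.lt_succ_iff.mp hj, rfl⟩
    · exact List.isChain_singleton _
    · intro x hx
      have : x = s := by simpa using hx
      subst this
      simpa using hch 0 (Nat.zero_le _)
  | cons r L' ih =>
    intro s d l hC hocc hdm hch hinv hhead
    rw [List.Chain', List.isChain_cons] at hC
    obtain ⟨hCh, hCt⟩ := hC
    have hBetw : Betw P S (s + l * d) r := hhead r rfl
    have hoccr : Occ P S r := hocc r (List.mem_cons_self)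
    have hocct : ∀ x ∈ L', Occ P S x := fun x hx => hocc x (List.mem_cons_of_mem _ hx)
    by_cases hA : l = 0 ∧ r - s ≤ P.length
    · -- start a real chain with the pair (s, r)
      obtain ⟨hl0, hrm⟩ := hA
      subst hl0
      simp only [Nat.zero_mul, Nat.add_zero] at hBetw
      have hsr : s < r := hBetw.1
      have hr' : s + (r - s) = r := by omega
      have h1r : s + 1 * (r - s) = r := by rw [Nat.one_mul, hr']
      obtain ⟨aps, hhd, hdiffs, hiff, hchain, hoccs⟩ :=
        ih s (r - s) 1 hCt hocct (by omega)
          (fun j hj => by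
            interval_cases j
            · simpa using hch 0 (Nat.zero_le _)
            · rw [h1r]; exact hoccr)
          (Or.inr ⟨by omega, by rw [hr']; exact hBetw,
            by simpa [hr'] using hBetw⟩)
          (fun y hy => by rw [h1r]; exact hCh y hy)
      refine ⟨aps, hhd, hdiffs, ?_, hchain, hoccs⟩
      intro p
      rw [← hiff p]
      constructor
      · rintro (⟨j, hj, rfl⟩ | hp)
        · interval_cases j
          exact Or.inl ⟨0, Nat.zero_le 1, by simp⟩
        · rcases List.mem_cons.mp hp with rfl | hp'
          · exact Or.inl ⟨1, le_refl 1, h1r.symm⟩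
          · exact Or.inr hp'
      · rintro (⟨j, hj, rfl⟩ | hp)
        · interval_cases j
          · exact Or.inl ⟨0, Nat.zero_le 0, by simp⟩
          · right; rw [h1r]; exact List.mem_cons_self
        · exact Or.inr (List.mem_cons_of_mem _ hp)
    · by_cases hB : 1 ≤ l ∧ r = s + (l+1) * d
      · -- extend the chain
        obtain ⟨hl1, hr⟩ := hB
        have hsucc : s + (l+1) * d = s + l * d + d := by rw [Nat.succ_mul]; omega
        obtain ⟨hd1, hBf, hBl⟩ : 1 ≤ d ∧ Betw P S s (s + d) ∧
            Betw P S (s + (l-1) * d) (s + l * d) := by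
          rcases hinv with h | h
          · omega
          · exact h
        obtain ⟨aps, hhd, hdiffs, hiff, hchain, hoccs⟩ :=
          ih s d (l+1) hCt hocct hdm
            (fun j hj => by
              rcases Nat.eq_or_lt_of_le hj with rfl | h
              · rw [← hr]; exact hoccr
              · exact hch j (by omega))
            (Or.inr ⟨hd1, hBf, by
              rw [show l + 1 - 1 = l by omega, ← hr]; exact hBetw⟩)
            (fun y hy => by rw [← hr]; exact hCh y hy)
        refine ⟨aps, hhd, hdiffs, ?_, hchain, hoccs⟩
        intro p
        rw [← hiff p]
        constructor
        · rintro (⟨j, hj, rfl⟩ | hp)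
          · exact Or.inl ⟨j, by omega, rfl⟩
          · rcases List.mem_cons.mp hp with rfl | hp'
            · exact Or.inl ⟨l+1, le_refl _, hr⟩
            · exact Or.inr hp'
        · rintro (⟨j, hj, rfl⟩ | hp)
          · rcases Nat.eq_or_lt_of_le hj with rfl | h
            · right; rw [← hr]; exact List.mem_cons_self
            · exact Or.inl ⟨j, by omega, rfl⟩
          · exact Or.inr (List.mem_cons_of_mem _ hp)
      · -- break: close the current chain and start fresh at r
        have hsep : Sep P S s r := by
          rcases hinv with hl0 | ⟨hd1, hBf, hBl⟩
          · subst hl0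
            simp only [Nat.zero_mul, Nat.add_zero] at hBetw
            have hgap : P.length < r - s := by
              by_contra h
              exact hA ⟨rfl, by omega⟩
            refine ⟨by omega, descent_of_gap (by simpa using hch 0 (Nat.zero_le _))
              hoccr hBetw (by omega) le_rfl le_rfl⟩
          · have hlpos : 1 ≤ l := by
              by_contra h
              have hl0 : l = 0 := by omega
              subst hl0
              simp only [Nat.zero_sub, Nat.zero_mul, Nat.add_zero] at hBl
              exact absurd hBl.1 (lt_irrefl s)
            obtain ⟨k, rfl⟩ : ∃ k, l = k + 1 := ⟨l - 1, by omega⟩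
            have hsucc : s + (k+1) * d = s + k * d + d := by rw [Nat.succ_mul]; omega
            have hqr : s + (k+1) * d < r := hBetw.1
            have hd'pos : 0 < r - (s + (k+1) * d) := by omega
            by_cases hd'm : P.length < r - (s + (k+1) * d)
            · refine ⟨by omega, descent_of_gap (hch (k+1) le_rfl) hoccr hBetw
                (by omega) (by omega) le_rfl⟩
            · have hd'ne : r - (s + (k+1) * d) ≠ d := by
                intro h
                refine hB ⟨by omega, ?_⟩
                rw [Nat.succ_mul]
                omega
              by_cases hspan : s + P.length ≤ r
              · refine ⟨hspan, ?_⟩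
                by_cases hdone : d = 1
                · exact descent_of_gap (hch (k+1) le_rfl) hoccr hBetw (by omega)
                    (by omega) le_rfl
                · have hdle : d ≤ (k+1) * d := Nat.le_mul_of_pos_left d (by omega)
                  exact descent_of_gap (by simpa using hch 0 (Nat.zero_le _))
                    (by simpa using hch 1 (by omega)) hBf (by omega) le_rfl (by omega)
              · exfalso
                have h1 : Occ P S (s + k * d) := hch k (by omega)
                have h2 : Occ P S (s + k * d + d) := by rw [← hsucc]; exact hch (k+1) le_rfl
                have h3 : Occ P S (s + k * d + d + (r - (s + (k+1) * d))) := by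
                  rw [show s + k * d + d + (r - (s + (k+1) * d)) = r by omega]
                  exact hoccr
                obtain ⟨c, hc, hcase⟩ := no_small_break h1 h2 h3 (by omega) hd'pos
                  (fun h => hd'ne h.symm) (by omega)
                have hBl' : Betw P S (s + k * d) (s + (k+1) * d) := by
                  rwa [show k + 1 - 1 = k by omega] at hBl
                rcases hcase with ⟨hc1, hc2⟩ | ⟨hc1, hc2⟩
                · exact hBl'.2 c hc1 (by omega) hc
                · exact hBetw.2 c (by omega) (by omega) hc
        obtain ⟨aps', hhd', hdiffs', hiff', hchain', hoccs'⟩ :=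
          ih r 0 0 hCt hocct (Nat.zero_le _)
            (fun j hj => by interval_cases j; simpa using hoccr)
            (Or.inl rfl)
            (fun y hy => by simpa using hCh y hy)
        refine ⟨(s, d, l+1) :: aps', rfl, ?_, ?_, ?_, ?_⟩
        · intro ap hap
          rcases List.mem_cons.mp hap with rfl | hap'
          · exact hdm
          · exact hdiffs' ap hap'
        · intro p
          constructor
          · rintro (⟨j, hj, rfl⟩ | hp)
            · exact ⟨(s,d,l+1), List.mem_cons_self, j, Nat.lt_succ_of_le hj, rfl⟩
            · rcases List.mem_cons.mp hp with rfl | hp'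
              · obtain ⟨ap, hap, hj⟩ := (hiff' p).mp (Or.inl ⟨0, le_rfl, by simp⟩)
                exact ⟨ap, List.mem_cons_of_mem _ hap, hj⟩
              · obtain ⟨ap, hap, hj⟩ := (hiff' p).mp (Or.inr hp')
                exact ⟨ap, List.mem_cons_of_mem _ hap, hj⟩
          · rintro ⟨ap, hap, j, hj, rfl⟩
            rcases List.mem_cons.mp hap with rfl | hap'
            · exact Or.inl ⟨j, Nat.lt_succ_iff.mp hj, rfl⟩
            · have := (hiff' _).mpr ⟨ap, hap', j, hj, rfl⟩
              rcases this with ⟨j', hj', he⟩ | hp'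
              · interval_cases j'
                right
                simp only [Nat.zero_mul, Nat.add_zero] at he
                rw [he]
                exact List.mem_cons_self
              · exact Or.inr (List.mem_cons_of_mem _ hp')
        · rw [List.map_cons, List.Chain', List.isChain_cons]
          refine ⟨fun y hy => ?_, hchain'⟩
          have hhd'' : (aps'.map Prod.fst).head? = some r := by
            rw [List.head?_map, hhd']
          rw [hhd''] at hy
          have hyr : r = y := by simpa using hy
          rw [← hyr]
          exact hsep
        · intro x hx
          rw [List.map_cons] at hx
          rcases List.mem_cons.mp hx with rfl | hx'
          · simpa using hch 0 (Nat.zero_le _)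
          · exact hoccs' x hx'

def breaks {γ : Type} (g : γ → γ → Bool) : List γ → ℕ
  | [] => 0
  | [_] => 0
  | a :: b :: t => (if g a b then 0 else 1) + breaks g (b :: t)

lemma chunks_ne_nil {γ : Type} (g : γ → γ → Bool) :
    ∀ l : List γ, l ≠ [] → chunks g l ≠ [] := by
  intro l hl
  cases l with
  | nil => exact absurd rfl hl
  | cons a t =>
    cases t with
    | nil => simp [chunks]
    | cons b t' =>
      rcases h : chunks g (b :: t') with _ | ⟨blk, G⟩ <;>
        · simp [chunks, h]
          try split <;> simp

lemma chunks_length {γ : Type} (g : γ → γ → Bool) :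
    ∀ l : List γ, l ≠ [] → (chunks g l).length = 1 + breaks g l := by
  intro l
  induction l with
  | nil => intro h; exact absurd rfl h
  | cons a t ih =>
    intro _
    cases t with
    | nil => simp [chunks, breaks]
    | cons b t' =>
      have hne := chunks_ne_nil g (b :: t') (by simp)
      rcases h : chunks g (b :: t') with _ | ⟨blk, G⟩
      · exact absurd h hne
      · have ihl := ih (by simp)
        rw [h] at ihl
        simp only [List.length_cons] at ihl
        cases hg : g a b
        · simp only [chunks, h, hg, Bool.false_eq_true, if_false, breaks,
            List.length_cons]
          omega
        · simp only [chunks, h, hg, if_true, breaks, List.length_cons]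
          omega

lemma descent_le_breaks {γ : Type} (g : γ → γ → Bool) :
    ∀ (l : List γ) (J : List ℕ), J.Pairwise (· < ·) →
    (∀ j ∈ J, ∃ x y, l[j]? = some x ∧ l[j+1]? = some y ∧ g x y = false) →
    J.length ≤ breaks g l := by
  intro l
  induction l with
  | nil =>
    intro J _ hJ
    cases J with
    | nil => simp [breaks]
    | cons j J' =>
      obtain ⟨x, y, hx, _, _⟩ := hJ j (List.mem_cons_self)
      simp at hx
  | cons a t ih =>
    cases t with
    | nil =>
      intro J _ hJ
      cases J with
      | nil => simp [breaks]
      | cons j J' =>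
        obtain ⟨x, y, _, hy, _⟩ := hJ j (List.mem_cons_self)
        have : ([a] : List γ)[j+1]? = none := by
          rw [List.getElem?_eq_none]
          simp
        rw [this] at hy
        cases hy
    | cons b t' =>
      intro J hp hJ
      have shift : ∀ (K : List ℕ), K.Pairwise (· < ·) → (∀ j ∈ K, 1 ≤ j) →
          (∀ j ∈ K, ∃ x y, (a :: b :: t')[j]? = some x ∧
            (a :: b :: t')[j+1]? = some y ∧ g x y = false) →
          K.length ≤ breaks g (b :: t') := by
        intro K hKp hK1 hKd
        have hlen : (K.map (· - 1)).length = K.length := List.length_map _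
        rw [← hlen]
        apply ih
        · rw [List.pairwise_map]
          refine hKp.imp_of_mem ?_
          intro x y hx hy hxy
          have := hK1 x hx
          omega
        · intro j hj
          obtain ⟨j₀, hj₀, rfl⟩ := List.mem_map.mp hj
          have h1 := hK1 j₀ hj₀
          obtain ⟨x, y, hx, hy, hg⟩ := hKd j₀ hj₀
          rw [show j₀ = (j₀ - 1) + 1 by omega] at hx hy
          rw [List.getElem?_cons_succ] at hx
          rw [List.getElem?_cons_succ] at hy
          exact ⟨x, y, hx, hy, hg⟩
      cases J with
      | nil => simp
      | cons j₀ J' =>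
        have hJ'p : J'.Pairwise (· < ·) := (List.pairwise_cons.mp hp).2
        have hgt : ∀ j ∈ J', j₀ < j := (List.pairwise_cons.mp hp).1
        by_cases h0 : j₀ = 0
        · subst h0
          obtain ⟨x, y, hx, hy, hg⟩ := hJ 0 (List.mem_cons_self)
          simp only [List.getElem?_cons_zero, Option.some.injEq] at hx
          rw [List.getElem?_cons_succ, List.getElem?_cons_zero] at hy
          have hy' : b = y := by simpa using hy
          have hgab : g a b = false := by rw [hx, hy']; exact hg
          have hKlen : J'.length ≤ breaks g (b :: t') :=
            shift J' hJ'p (fun j hj => by have := hgt j hj; omega)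
              (fun j hj => hJ j (List.mem_cons_of_mem _ hj))
          have hbr : breaks g (a :: b :: t') = 1 + breaks g (b :: t') := by
            simp [breaks, hgab]
          rw [hbr, List.length_cons]
          omega
        · have hall : ∀ j ∈ j₀ :: J', 1 ≤ j := by
            intro j hj
            rcases List.mem_cons.mp hj with rfl | h
            · omega
            · have := hgt j h; omega
          have hle := shift (j₀ :: J') hp hall hJ
          have hmono : breaks g (b :: t') ≤ breaks g (a :: b :: t') := by
            simp only [breaks]
            split <;> omega
          omega

lemma chain_mul_le {m n : ℕ} :
    ∀ (t : List ℕ) (a : ℕ), (a :: t).Chain' (fun x y => x + m ≤ y) →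
    (∀ x ∈ a :: t, x + m ≤ n) → a + t.length * m + m ≤ n := by
  intro t
  induction t with
  | nil =>
    intro a _ hall
    simpa using hall a (List.mem_cons_self)
  | cons b t' ih =>
    intro a hC hall
    rw [List.Chain', List.isChain_cons_cons] at hC
    have h2 := ih b hC.2 (fun x hx => hall x (List.mem_cons_of_mem _ hx))
    have h1 := hC.1
    rw [List.length_cons, Nat.succ_mul]
    omega

lemma pairwise_adj (l : List ℕ) (hp : l.Pairwise (· < ·)) :
    l.Chain' (fun a b => a < b ∧ ∀ c ∈ l, ¬(a < c ∧ c < b)) := by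
  rw [List.Chain', List.isChain_iff_getElem]
  intro i hi
  have hg := List.pairwise_iff_getElem.mp hp
  refine ⟨hg i (i+1) (by omega) (by omega) (by omega), ?_⟩
  rintro c hc ⟨h1, h2⟩
  obtain ⟨j, hj, rfl⟩ := List.getElem_of_mem hc
  rcases Nat.lt_or_ge j (i+1) with h | h
  · rcases Nat.lt_or_ge j i with h' | h'
    · have := hg j i hj (by omega) h'
      omega
    · have : j = i := by omega
      subst this
      omega
  · rcases Nat.eq_or_lt_of_le h with h' | h'
    · subst h'
      omega
    · have := hg (i+1) j (by omega) hj h'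
      omega

lemma extract_descents {P S : List β} (hm : 0 < P.length) :
    ∀ (t : List ℕ) (s : ℕ), (s :: t).Chain' (Sep P S) →
    (∀ x ∈ s :: t, x + P.length ≤ S.length) →
    ∃ J : List ℕ, J.length = t.length ∧ J.Pairwise (· < ·) ∧ (∀ j ∈ J, s ≤ j) ∧
      ∀ j ∈ J, j + 1 < S.length ∧ S[j]? ≠ S[j+1]? := by
  intro t
  induction t with
  | nil => intro s _ _; exact ⟨[], rfl, by simp, by simp, by simp⟩
  | cons b t' ih =>
    intro s hC hall
    rw [List.Chain', List.isChain_cons_cons] at hC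
    obtain ⟨⟨hsep1, j₀, hj₀1, hj₀2, hj₀3⟩, hC'⟩ := hC
    obtain ⟨J', hlen, hp, hlb, hde⟩ :=
      ih b hC' (fun x hx => hall x (List.mem_cons_of_mem _ hx))
    refine ⟨j₀ :: J', by simp [hlen], ?_, ?_, ?_⟩
    · rw [List.pairwise_cons]
      exact ⟨fun j hj => lt_of_lt_of_le hj₀2 (hlb j hj), hp⟩
    · intro j hj
      rcases List.mem_cons.mp hj with rfl | h
      · exact hj₀1
      · have := hlb j h
        omega
    · intro j hj
      rcases List.mem_cons.mp hj with rfl | h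
      · refine ⟨?_, hj₀3⟩
        have := hall b (List.mem_cons_of_mem _ (List.mem_cons_self))
        omega
      · exact hde j h

/-- For all nonempty strings `P` and `S`, there is a family of at
most `min(|rle(S)|, ⌊|S|/|P|⌋)` arithmetic progressions (each given by a start, a
common difference at most `|P|`, and a number of terms; a singleton counts as a
progression) whose union equals `Occ(P,S) = {i : S[i..i+|P|) = P}`. -/
theorem occurrences_as_progressions {β : Type} [DecidableEq β]
    (P S : List β) (hP : P ≠ []) (hS : S ≠ []) :
    ∃ aps : List (ℕ × ℕ × ℕ),
      aps.length ≤ min (chunks (fun a b => decide (a = b)) S).length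
        (S.length / P.length) ∧
      (∀ ap ∈ aps, ap.2.1 ≤ P.length) ∧
      (∀ p : ℕ,
        (p + P.length ≤ S.length ∧ (S.drop p).take P.length = P) ↔
        ∃ ap ∈ aps, ∃ j < ap.2.2, p = ap.1 + j * ap.2.1) := by
  have hm : 0 < P.length := List.length_pos_iff.mpr hP
  set O : List ℕ := (List.range (S.length + 1)).filter
      (fun p => decide (p + P.length ≤ S.length ∧ (S.drop p).take P.length = P))
    with hOdef
  have hOmem : ∀ p, p ∈ O ↔ Occ P S p := by
    intro p
    rw [hOdef]
    simp only [List.mem_filter, List.mem_range, decide_eq_true_eq]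
    constructor
    · rintro ⟨_, h⟩; exact (occ_iff P S p).mp h
    · intro h
      refine ⟨by have := h.1; omega, (occ_iff P S p).mpr h⟩
  have hOsorted : O.Pairwise (· < ·) := List.pairwise_lt_range.filter _
  have hOchain : O.Chain' (Betw P S) :=
    (pairwise_adj O hOsorted).imp
      (fun a b hab =>
        ⟨hab.1, fun c hc1 hc2 hocc => hab.2 c ((hOmem c).mpr hocc) ⟨hc1, hc2⟩⟩)
  rcases hO : O with _ | ⟨s, rest⟩
  · refine ⟨[], by simp, by simp, fun p => ?_⟩
    constructor
    · intro h
      have hpO : p ∈ O := (hOmem p).mpr ((occ_iff P S p).mp h)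
      rw [hO] at hpO
      simp at hpO
    · rintro ⟨ap, hap, _⟩
      simp at hap
  · rw [hO] at hOchain
    rw [List.Chain', List.isChain_cons] at hOchain
    have hOccs : Occ P S s := (hOmem s).mp (by rw [hO]; exact List.mem_cons_self)
    obtain ⟨aps, hhd, hdiffs, hiff, hchain, hoccs⟩ :=
      go hm rest s 0 0 hOchain.2
        (fun x hx => (hOmem x).mp (by rw [hO]; exact List.mem_cons_of_mem _ hx))
        (Nat.zero_le _)
        (fun j hj => by interval_cases j; simpa using hOccs)
        (Or.inl rfl)
        (fun r hr => by simpa using hOchain.1 r hr)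
    refine ⟨aps, ?_, hdiffs, ?_⟩
    · have hlen : aps.length = (aps.map Prod.fst).length := (List.length_map _).symm
      rcases haps : aps.map Prod.fst with _ | ⟨s₀, starts'⟩
      · have : aps = [] := List.map_eq_nil_iff.mp haps
        simp [this]
      · rw [haps] at hchain hoccs
        have hboundn : aps.length ≤ S.length / P.length := by
          have hsp : (s₀ :: starts').Chain' (fun x y => x + P.length ≤ y) :=
            hchain.imp (fun a b h => h.1)
          have hall : ∀ x ∈ s₀ :: starts', x + P.length ≤ S.length :=
            fun x hx => (hoccs x hx).1
          have hmul := chain_mul_le starts' s₀ hsp hall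
          rw [hlen, haps, Nat.le_div_iff_mul_le hm, List.length_cons, Nat.succ_mul]
          omega
        have hboundc : aps.length ≤ (chunks (fun a b => decide (a = b)) S).length := by
          have hall : ∀ x ∈ s₀ :: starts', x + P.length ≤ S.length :=
            fun x hx => (hoccs x hx).1
          obtain ⟨J, hJlen, hJp, _, hJd⟩ := extract_descents hm starts' s₀ hchain hall
          have hle := descent_le_breaks (fun a b => decide (a = b)) S J hJp ?_
          · rw [chunks_length _ S hS, hlen, haps, List.length_cons, ← hJlen]
            omega
          · intro j hj
            obtain ⟨h1, h2⟩ := hJd j hj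
            have hj1 : j < S.length := by omega
            refine ⟨S[j], S[j+1], List.getElem?_eq_getElem hj1,
              List.getElem?_eq_getElem h1, ?_⟩
            rw [List.getElem?_eq_getElem hj1, List.getElem?_eq_getElem h1] at h2
            exact decide_eq_false (by simpa using h2)
        exact le_min hboundc hboundn
    · intro p
      rw [occ_iff P S p, ← hiff p]
      constructor
      · intro h
        have hpO : p ∈ O := (hOmem p).mpr h
        rw [hO] at hpO
        rcases List.mem_cons.mp hpO with rfl | h'
        · exact Or.inl ⟨0, le_rfl, by simp⟩
        · exact Or.inr h'
      · rintro (⟨j, hj, rfl⟩ | h')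
        · interval_cases j
          simpa using hOccs
        · exact (hOmem p).mp (by rw [hO]; exact List.mem_cons_of_mem _ h')

end IPM
end

section
/- Let X, Y be strings over an alphabet Σ, let 0 ≤ c̄ < c ≤ |X|, W = X[c̄..c), and let g be an integer with 0 < g ≤ |W| that is a period of the whole string X. Let ā ≥ 0 and s ≥ 1 be integers with ā + (s−1)g + |W| ≤ |Y| such that Y[ā+ig..ā+ig+|W|) = W for every i ∈ [0..s). Set a = ā + (s−1)g + |W|, v̄ = max{d : d ≤ ā and Y[ā−d..ā) = Y[ā+g−d..ā+g)}, and v = max{d : a + d ≤ |Y| and Y[a..a+d) = Y[a−g..a−g+d)}. Then for every i ∈ [0..s): X occurs in Y at position ā − c̄ + ig (i.e., 0 ≤ ā − c̄ + ig, ā − c̄ + ig + |X| ≤ |Y|, and Y[ā−c̄+ig..ā−c̄+ig+|X|) = X) if and only if c̄ ≤ v̄ + ig and |X| − c ≤ v + (s−1−i)g. -/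
/-!
Two occurrences of `W` at distance `g` make `Y` `g`-periodic on their union; since `g ≤ |W|`,
consecutive unions overlap by a full period and chain together, so `Y` has period `g` on `[ā, a)`.
The definitions of `v̄` and `v` say exactly that this periodicity extends to the window
`[ā - v̄, a + v)` and no further on either side. If `X` occurs at `p = ā - c̄ + ig`, its period `g`
makes `Y` `g`-periodic on `[p, p + |X|)`, so this span lies inside the window. Conversely, inside
the window `Y[p..)` and `X` are both `g`-periodic and agree on `X[c̄..c)`, which covers a full
period, hence they agree everywhere.
-/

namespace IPM

/-- A positive integer `g ≤ |S|` is a period of `S` if `S[t] = S[t+g]` for every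
`t ∈ [0..|S|−g)`. -/
def IsPeriod {β : Type} (S : List β) (g : ℕ) : Prop :=
  0 < g ∧ g ≤ S.length ∧ ∀ t, t + g < S.length → S[t]? = S[t + g]?

/-- `W` occurs in `S` at position `p`, i.e. `S[p..p+|W|) = W`. -/
def OccursAt {β : Type} (W S : List β) (p : ℕ) : Prop :=
  p + W.length ≤ S.length ∧ (S.drop p).take W.length = W

open Set

section PeriodicOn

variable {α : Type*} {f h : ℕ → α} {g L U : ℕ}

def PeriodicOn (f : ℕ → α) (g L U : ℕ) : Prop :=
  ∀ t, L ≤ t → t + g < U → f t = f (t + g)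

theorem PeriodicOn.mono {L' U' : ℕ} (hf : PeriodicOn f g L U) (hL : L ≤ L') (hU : U' ≤ U) :
    PeriodicOn f g L' U' :=
  fun t ht htU => hf t (hL.trans ht) (htU.trans_le hU)

theorem PeriodicOn.congr (hf : PeriodicOn f g L U) (hfh : EqOn f h (Ico L U)) :
    PeriodicOn h g L U := by
  intro t ht htU
  rw [← hfh ⟨ht, by omega⟩, ← hfh ⟨by omega, htU⟩]
  exact hf t ht htU

theorem periodicOn_comp_add_iff (q : ℕ) :
    PeriodicOn (fun j => f (q + j)) g L U ↔ PeriodicOn f g (q + L) (q + U) := by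
  constructor
  · intro hf t ht htU
    obtain ⟨j, rfl⟩ : ∃ j, t = q + j := ⟨t - q, by omega⟩
    simpa only [Nat.add_assoc] using hf j (by omega) (by omega)
  · intro hf t ht htU
    simpa only [Nat.add_assoc] using hf (q + t) (by omega) (by omega)

theorem PeriodicOn.union {L₂ U₁ : ℕ} (h₁ : PeriodicOn f g L U₁) (h₂ : PeriodicOn f g L₂ U)
    (hoverlap : L₂ + g ≤ U₁) : PeriodicOn f g L U := by
  intro t ht htU
  rcases lt_or_ge (t + g) U₁ with h | h
  · exact h₁ t ht h
  · exact h₂ t (by omega) htU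

theorem PeriodicOn.apply_add_mul (hf : PeriodicOn f g L U) {t : ℕ} (ht : L ≤ t) :
    ∀ k, t + k * g < U → f t = f (t + k * g)
  | 0, _ => by simp
  | k + 1, hk => by
    rw [Nat.add_one_mul] at hk ⊢
    rw [hf.apply_add_mul ht k (by omega), ← Nat.add_assoc]
    exact hf _ (by omega) (by omega)

theorem PeriodicOn.apply_eq_of_modEq (hf : PeriodicOn f g L U) {t t' : ℕ}
    (ht : t ∈ Ico L U) (ht' : t' ∈ Ico L U) (hmod : t ≡ t' [MOD g]) : f t = f t' := by
  wlog hle : t ≤ t' generalizing t t'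
  · exact (this ht' ht hmod.symm (by omega)).symm
  obtain ⟨k, hk⟩ := (Nat.modEq_iff_dvd' hle).1 hmod
  obtain rfl : t' = t + k * g := by rw [Nat.mul_comm]; omega
  exact hf.apply_add_mul ht.1 k ht'.2

theorem exists_mem_Ico_modEq (hg : 0 < g) (m t : ℕ) :
    ∃ t' ∈ Ico m (m + g), t' ≡ t [MOD g] := by
  -- `g * m ≥ m` keeps the subtraction from truncating
  refine ⟨m + (t + g * m - m) % g,
    ⟨by omega, by have := Nat.mod_lt (t + g * m - m) hg; omega⟩, ?_⟩
  calc m + (t + g * m - m) % g ≡ m + (t + g * m - m) [MOD g] := (Nat.mod_modEq _ g).add_left m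
    _ = t + g * m := by have := Nat.le_mul_of_pos_left m hg; omega
    _ ≡ t [MOD g] := Nat.add_mul_mod_self_left t g m

theorem PeriodicOn.eqOn_of_eqOn_Ico (hf : PeriodicOn f g L U) (hh : PeriodicOn h g L U)
    (hg : 0 < g) {m : ℕ} (hLm : L ≤ m) (hmU : m + g ≤ U) (hfh : EqOn f h (Ico m (m + g))) :
    EqOn f h (Ico L U) := by
  intro t ht
  obtain ⟨t', ht', hmod⟩ := exists_mem_Ico_modEq hg m t
  have ht'LU : t' ∈ Ico L U := ⟨hLm.trans ht'.1, ht'.2.trans_le hmU⟩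
  rw [hf.apply_eq_of_modEq ht ht'LU hmod.symm, hfh ht', hh.apply_eq_of_modEq ht'LU ht hmod]

end PeriodicOn

section Strings

variable {β : Type} {X Y W : List β} {g p : ℕ}

theorem take_drop_eq_take_drop_iff_periodicOn {m n : ℕ} (d : ℕ) (hmn : m + g = n) :
    (Y.drop m).take d = (Y.drop n).take d ↔ PeriodicOn (Y[·]?) g m (n + d) := by
  simp only [List.ext_getElem?_iff, List.getElem?_take, List.getElem?_drop]
  constructor
  · intro H t ht htU
    have := H (t - m)
    simp only [show t - m < d by omega, if_true] at this
    rwa [Nat.add_sub_cancel' ht, show n + (t - m) = t + g by omega] at this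
  · intro H j
    split_ifs with hj
    · exact (H (m + j) (by omega) (by omega)).trans (by congr 1; omega)
    · rfl

theorem occursAt_iff_eqOn : OccursAt W Y p ↔
    p + W.length ≤ Y.length ∧ EqOn (fun j => Y[p + j]?) (W[·]?) (Ico 0 W.length) := by
  refine and_congr_right fun hlen => ?_
  simp only [List.ext_getElem?_iff, List.getElem?_take, List.getElem?_drop]
  constructor
  · intro H j hj
    simpa [hj.2] using H j
  · intro H j
    split_ifs with hj
    · exact H ⟨Nat.zero_le j, hj⟩
    · rw [List.getElem?_eq_none (by omega)]

theorem IsPeriod.periodicOn (hX : IsPeriod X g) : PeriodicOn (X[·]?) g 0 X.length :=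
  fun t _ ht => hX.2.2 t ht

theorem IsPeriod.take_drop (hX : IsPeriod X g) {m n : ℕ} (hg : g ≤ ((X.drop m).take n).length) :
    IsPeriod ((X.drop m).take n) g := by
  refine ⟨hX.1, hg, fun t ht => ?_⟩
  simp only [List.length_take, List.length_drop] at ht
  simp only [List.getElem?_take, List.getElem?_drop, show t < n by omega, show t + g < n by omega,
    if_true, ← Nat.add_assoc]
  exact hX.2.2 (m + t) (by omega)

theorem OccursAt.periodicOn (hocc : OccursAt X Y p) (hX : IsPeriod X g) :
    PeriodicOn (Y[·]?) g p (p + X.length) := by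
  simpa using (periodicOn_comp_add_iff p).1
    (hX.periodicOn.congr (occursAt_iff_eqOn.1 hocc).2.symm)

theorem periodicOn_of_forall_occursAt {q s : ℕ} (hW : IsPeriod W g)
    (hocc : ∀ i < s, OccursAt W Y (q + i * g)) (hs : 0 < s) :
    PeriodicOn (Y[·]?) g q (q + (s - 1) * g + W.length) := by
  suffices ∀ n < s, PeriodicOn (Y[·]?) g q (q + n * g + W.length) from this _ (by omega)
  intro n hn
  induction n with
  | zero => simpa using (hocc 0 hs).periodicOn hW
  | succ n ih =>
    have hstep : PeriodicOn (Y[·]?) g (q + n * g) (q + n * g + g + W.length) := by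
      refine (take_drop_eq_take_drop_iff_periodicOn W.length rfl).1 ?_
      rw [(hocc n (by omega)).2, Nat.add_assoc, ← Nat.add_one_mul]
      exact (hocc (n + 1) hn).2.symm
    rw [Nat.add_one_mul, ← Nat.add_assoc]
    exact (ih (by omega)).union hstep (by have := hW.2.1; omega)

theorem occursAt_of_occursAt_take_drop (hX : IsPeriod X g)
    (hY : PeriodicOn (Y[·]?) g p (p + X.length)) (hlen : p + X.length ≤ Y.length) {m n : ℕ}
    (hgn : g ≤ n) (hmn : m + n ≤ X.length) (hocc : OccursAt ((X.drop m).take n) Y (p + m)) :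
    OccursAt X Y p := by
  refine occursAt_iff_eqOn.2 ⟨hlen, ?_⟩
  have hYX : PeriodicOn (fun j => Y[p + j]?) g 0 X.length :=
    (periodicOn_comp_add_iff p).2 (by simpa using hY)
  refine hYX.eqOn_of_eqOn_Ico hX.periodicOn hX.1 (Nat.zero_le m) (by omega)
    fun j ⟨hmj, hjg⟩ => ?_
  have := (occursAt_iff_eqOn.1 hocc).2 (show j - m ∈ Ico 0 _ by simp; omega)
  simp only [List.getElem?_take, List.getElem?_drop, show j - m < n by omega, if_true,
    Nat.add_sub_cancel' hmj, Nat.add_assoc] at this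
  exact this

theorem take_drop_sub_eq_iff_periodicOn {m d : ℕ} (hd : d ≤ m) :
    (Y.drop (m - d)).take d = (Y.drop (m + g - d)).take d ↔
      PeriodicOn (Y[·]?) g (m - d) (m + g) := by
  rw [take_drop_eq_take_drop_iff_periodicOn (g := g) d (by omega),
    Nat.sub_add_cancel (by omega : d ≤ m + g)]

theorem take_drop_eq_take_drop_sub_iff_periodicOn {m d : ℕ} (hg : g ≤ m) :
    (Y.drop m).take d = (Y.drop (m - g)).take d ↔ PeriodicOn (Y[·]?) g (m - g) (m + d) := by
  rw [eq_comm]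
  exact take_drop_eq_take_drop_iff_periodicOn (g := g) d (by omega)

theorem sub_le_of_periodicOn_of_isGreatest {m vb q : ℕ}
    (hvb : IsGreatest {d | d ≤ m ∧ (Y.drop (m - d)).take d = (Y.drop (m + g - d)).take d} vb)
    (hq : PeriodicOn (Y[·]?) g q (m + g)) : m - vb ≤ q := by
  rcases le_or_gt q m with hqm | hqm
  · have := hvb.2 ⟨Nat.sub_le m q, (take_drop_sub_eq_iff_periodicOn (Nat.sub_le m q)).2
      (by rwa [Nat.sub_sub_self hqm])⟩
    omega
  · omega

theorem le_add_of_periodicOn_of_isGreatest {m v q : ℕ}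
    (hv : IsGreatest {d | m + d ≤ Y.length ∧ (Y.drop m).take d = (Y.drop (m - g)).take d} v)
    (hg : g ≤ m) (hq : PeriodicOn (Y[·]?) g (m - g) q) (hqY : q ≤ Y.length) : q ≤ m + v := by
  rcases le_or_gt q m with hqm | hqm
  · omega
  · have := hv.2 (show q - m ∈ _ from ⟨by omega, (take_drop_eq_take_drop_sub_iff_periodicOn hg).2
      (by rwa [Nat.add_sub_cancel' hqm.le])⟩)
    omega

end Strings

theorem periodic_case_characterization_general {β : Type} (X Y : List β)
    (cb c : ℕ) (hc : c ≤ X.length)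
    (W : List β) (hW : W = (X.drop cb).take (c - cb))
    (g : ℕ) (hgW : g ≤ W.length) (hgX : IsPeriod X g)
    (ab s : ℕ)
    (hoccW : ∀ i < s, OccursAt W Y (ab + i * g))
    (a : ℕ) (ha : a = ab + (s - 1) * g + W.length)
    (vb : ℕ) (hvb : IsGreatest {d : ℕ | d ≤ ab ∧
      (Y.drop (ab - d)).take d = (Y.drop (ab + g - d)).take d} vb)
    (v : ℕ) (hv : IsGreatest {d : ℕ | a + d ≤ Y.length ∧
      (Y.drop a).take d = (Y.drop (a - g)).take d} v) :
    ∀ i < s,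
      (cb ≤ ab + i * g ∧ OccursAt X Y (ab + i * g - cb)) ↔
      (cb ≤ vb + i * g ∧ X.length - c ≤ v + (s - 1 - i) * g) := by
  intro i hi
  subst ha
  have hg := hgX.1
  have hWlen : W.length = c - cb := by rw [hW, List.length_take, List.length_drop]; omega
  have hWper : IsPeriod W g := hW ▸ hgX.take_drop (hW ▸ hgW)
  have hwin : PeriodicOn (Y[·]?) g (ab - vb) (ab + (s - 1) * g + W.length + v) :=
    (((take_drop_sub_eq_iff_periodicOn hvb.1.1).1 hvb.1.2).union
      (periodicOn_of_forall_occursAt hWper hoccW (by omega)) (by omega)).union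
      ((take_drop_eq_take_drop_sub_iff_periodicOn (by omega)).1 hv.1.2) (by omega)
  have hig : i * g ≤ (s - 1) * g := Nat.mul_le_mul_right g (by omega)
  have hsplit : (s - 1 - i) * g + i * g = (s - 1) * g := by
    rw [← Nat.add_mul, Nat.sub_add_cancel (by omega)]
  constructor
  · rintro ⟨hcb, hocc⟩
    have hX := hocc.periodicOn hgX
    have hleft := sub_le_of_periodicOn_of_isGreatest hvb (hX.mono le_rfl (by omega))
    have hright :=
      le_add_of_periodicOn_of_isGreatest hv (by omega) (hX.mono (by omega) le_rfl) hocc.1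
    omega
  · rintro ⟨hleft, hright⟩
    have hvb_le := hvb.1.1
    have hv_len := hv.1.1
    have hoccW' : OccursAt ((X.drop cb).take (c - cb)) Y (ab + i * g - cb + cb) := by
      rw [← hW, show ab + i * g - cb + cb = ab + i * g by omega]
      exact hoccW i hi
    exact ⟨by omega, occursAt_of_occursAt_take_drop hgX (hwin.mono (by omega) (by omega))
      (by omega) (hWlen ▸ hgW) (by omega) hoccW'⟩

/-- Let `W = X[c̄..c)` with `0 ≤ c̄ < c ≤ |X|` and let `g` with
`0 < g ≤ |W|` be a period of the whole string `X`. Let `Y[ā+ig..ā+ig+|W|) = W` for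
all `i ∈ [0..s)` and `a = ā + (s−1)g + |W|`; let `v̄` and `v` be the maximal backward
and forward extensions of the period `g` of `Y[ā..a)` within `Y`. Then for every
`i ∈ [0..s)`: `X` occurs in `Y` at position `ā − c̄ + ig` (in particular this
position is nonnegative) iff `c̄ ≤ v̄ + ig` and `|X| − c ≤ v + (s−1−i)g`. -/
theorem periodic_case_characterization {β : Type} (X Y : List β)
    (cb c : ℕ) (hcb : cb < c) (hc : c ≤ X.length)
    (W : List β) (hW : W = (X.drop cb).take (c - cb))
    (g : ℕ) (hg0 : 0 < g) (hgW : g ≤ W.length) (hgX : IsPeriod X g)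
    (ab s : ℕ) (hs : 1 ≤ s) (hfit : ab + (s - 1) * g + W.length ≤ Y.length)
    (hoccW : ∀ i < s, OccursAt W Y (ab + i * g))
    (a : ℕ) (ha : a = ab + (s - 1) * g + W.length)
    (vb : ℕ) (hvb : IsGreatest {d : ℕ | d ≤ ab ∧
      (Y.drop (ab - d)).take d = (Y.drop (ab + g - d)).take d} vb)
    (v : ℕ) (hv : IsGreatest {d : ℕ | a + d ≤ Y.length ∧
      (Y.drop a).take d = (Y.drop (a - g)).take d} v) :
    ∀ i < s,
      (cb ≤ ab + i * g ∧ OccursAt X Y (ab + i * g - cb)) ↔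
      (cb ≤ vb + i * g ∧ X.length - c ≤ v + (s - 1 - i) * g) :=
  periodic_case_characterization_general X Y cb c hc W hW g hgW hgX ab s hoccW a ha vb hvb v hv
end IPM
end

section
/- Let X, Y be strings over an alphabet Σ, let 0 ≤ c̄ < c ≤ |X|, W = X[c̄..c), and let g be an integer with 0 < g ≤ |W| that is a period of W. Let ā ≥ 0 and s ≥ 1 be integers with ā + (s−1)g + |W| ≤ |Y| such that Y[ā+ig..ā+ig+|W|) = W for every i ∈ [0..s). Define ū = max{d : d ≤ c̄ and X[c̄−d..c̄) = X[c̄+g−d..c̄+g)} and v̄ = max{d : d ≤ ā and Y[ā−d..ā) = Y[ā+g−d..ā+g)}, and assume ū < c̄. Then for every i ∈ [0..s), if X occurs in Y at position p = ā + ig − c̄ (with 0 ≤ p and p + |X| ≤ |Y|), then ig = ū − v̄, i.e., p = ā − c̄ + ū − v̄; in particular, there is at most one i ∈ [0..s) for which X occurs in Y at position ā + ig − c̄. -/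
/-! Write `E_S(a)` for the set of `d ≤ a` with `S[a-d..a) = S[a+g-d..a+g)`, so that
`ū = max E_X(c̄)` and `v̄ = max E_Y(ā)`. If `X` occurs in `Y` at `ā + ig − c̄`, the two sets
`E_X(c̄)` and `E_Y(ā + ig)` agree below `c̄`. Since the copies of `W` at `ā, ā + g, …, ā + ig`
overlap by at least `g`, `E_Y(ā + ig)` consists exactly of the `d ≤ ig + v̄`, and as `ū < c̄`
this forces `ū = ig + v̄`. -/

namespace IPM

/-- `leftExtensions S g a` is the set `E_S(a)` above. -/
def leftExtensions {α : Type*} (S : List α) (g a : ℕ) : Set ℕ :=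
  {d | d ≤ a ∧ (S.drop (a - d)).take d = (S.drop (a + g - d)).take d}

section LeftExtensions

variable {α : Type*} {S : List α} {g a d : ℕ}

theorem take_drop_eq_take_drop_iff (S T : List α) (a b d : ℕ) :
    (S.drop a).take d = (T.drop b).take d ↔ ∀ r < d, S[a + r]? = T[b + r]? := by
  constructor
  · intro h r hr
    simpa [List.getElem?_take, List.getElem?_drop, hr] using congrArg (·[r]?) h
  · intro h
    refine List.ext_getElem? fun r => ?_
    by_cases hr : r < d
    · simpa [List.getElem?_take, List.getElem?_drop, hr] using h r hr
    · simp [hr]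

theorem mem_leftExtensions_iff :
    d ∈ leftExtensions S g a ↔ d ≤ a ∧ ∀ k, 0 < k → k ≤ d → S[a - k]? = S[a + g - k]? := by
  refine and_congr_right fun hd => (take_drop_eq_take_drop_iff S S _ _ d).trans ⟨?_, ?_⟩
  · intro h k hk hkd
    have := h (d - k) (by omega)
    rwa [show a - d + (d - k) = a - k by omega, show a + g - d + (d - k) = a + g - k by omega]
      at this
  · intro h r hr
    have := h (d - r) (by omega) (by omega)
    rwa [show a - (d - r) = a - d + r by omega, show a + g - (d - r) = a + g - d + r by omega]
      at this

theorem mem_leftExtensions_of_le {e : ℕ} (hd : d ∈ leftExtensions S g a) (hed : e ≤ d) :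
    e ∈ leftExtensions S g a := by
  rw [mem_leftExtensions_iff] at hd ⊢
  exact ⟨hed.trans hd.1, fun k hk hke => hd.2 k hk (hke.trans hed)⟩

theorem sub_mem_leftExtensions {q : ℕ} (hd : d ∈ leftExtensions S g (a + q)) (hqd : q ≤ d) :
    d - q ∈ leftExtensions S g a := by
  rw [mem_leftExtensions_iff] at hd ⊢
  refine ⟨by omega, fun k hk hkd => ?_⟩
  have := hd.2 (k + q) (by omega) (by omega)
  rwa [show a + q - (k + q) = a - k by omega, show a + q + g - (k + q) = a + g - k by omega]
    at this

end LeftExtensions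

section Occurrences

variable {β : Type} {W X Y : List β} {g a c d i p v : ℕ}

theorem OccursAt.getElem?_add (h : OccursAt W Y p) {r : ℕ} (hr : r < W.length) :
    Y[p + r]? = W[r]? := by
  conv_rhs => rw [← h.2]
  simp [List.getElem?_drop, hr]

theorem add_mem_leftExtensions_of_occursAt (hgW : g ≤ W.length) (hd : d ∈ leftExtensions Y g a)
    (ha : OccursAt W Y a) (hag : OccursAt W Y (a + g)) :
    g + d ∈ leftExtensions Y g (a + g) := by
  rw [mem_leftExtensions_iff] at hd ⊢
  refine ⟨by omega, fun k hk hkd => ?_⟩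
  by_cases hkg : k ≤ g
  · rw [show a + g - k = a + (g - k) by omega, show a + g + g - k = a + g + (g - k) by omega,
      ha.getElem?_add (by omega), hag.getElem?_add (by omega)]
  · have := hd.2 (k - g) (by omega) (by omega)
    rwa [show a - (k - g) = a + g - k by omega, show a + g - (k - g) = a + g + g - k by omega]
      at this

theorem mul_add_mem_leftExtensions (hgW : g ≤ W.length) (hv : v ∈ leftExtensions Y g a)
    (hW : ∀ j ≤ i, OccursAt W Y (a + j * g)) :
    i * g + v ∈ leftExtensions Y g (a + i * g) := by
  induction i with
  | zero => simpa using hv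
  | succ i ih =>
    have := add_mem_leftExtensions_of_occursAt hgW (ih fun j hj => hW j (by omega))
      (hW i (by omega)) (by simpa [add_mul, add_assoc] using hW (i + 1) le_rfl)
    rwa [show (i + 1) * g + v = g + (i * g + v) by ring,
      show a + (i + 1) * g = a + i * g + g by ring]

theorem mem_leftExtensions_iff_of_occursAt (hocc : OccursAt X Y p) (hX : c + g ≤ X.length)
    (hdc : d ≤ c) : d ∈ leftExtensions X g c ↔ d ∈ leftExtensions Y g (p + c) := by
  have transport : ∀ t < c + g, Y[p + t]? = X[t]? := fun t ht => hocc.getElem?_add (by omega)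
  simp only [mem_leftExtensions_iff]
  refine ⟨fun h => ⟨by omega, fun k hk hkd => ?_⟩, fun h => ⟨hdc, fun k hk hkd => ?_⟩⟩
  · rw [show p + c - k = p + (c - k) by omega, show p + c + g - k = p + (c + g - k) by omega,
      transport _ (by omega), transport _ (by omega)]
    exact h.2 k hk hkd
  · rw [← transport (c - k) (by omega), ← transport (c + g - k) (by omega),
      show p + (c - k) = p + c - k by omega, show p + (c + g - k) = p + c + g - k by omega]
    exact h.2 k hk hkd

theorem mul_add_eq_of_occursAt {u : ℕ} (hX : c + g ≤ X.length) (hgW : g ≤ W.length)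
    (hW : ∀ j ≤ i, OccursAt W Y (a + j * g)) (hu : IsGreatest (leftExtensions X g c) u)
    (hv : IsGreatest (leftExtensions Y g a) v) (huc : u < c) (hca : c ≤ a + i * g)
    (hocc : OccursAt X Y (a + i * g - c)) :
    i * g + v = u := by
  have transport : ∀ d ≤ c, d ∈ leftExtensions X g c ↔ d ∈ leftExtensions Y g (a + i * g) := by
    intro d hd
    rw [mem_leftExtensions_iff_of_occursAt hocc hX hd, Nat.sub_add_cancel hca]
  apply le_antisymm
  · by_contra h
    have hu1 : u + 1 ∈ leftExtensions X g c := (transport _ huc).2 <|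
      mem_leftExtensions_of_le (mul_add_mem_leftExtensions hgW hv.1 hW) (by omega)
    exact absurd (hu.2 hu1) (by omega)
  · have hu' := (transport u hu.1.1).1 hu.1
    by_cases h : i * g ≤ u
    · have := hv.2 (sub_mem_leftExtensions hu' h)
      omega
    · omega

end Occurrences

theorem left_mismatch_unique_candidate_general {β : Type} (X Y : List β)
    (cb c : ℕ)
    (W : List β) (hW : W = (X.drop cb).take (c - cb))
    (g : ℕ) (hgW : IsPeriod W g)
    (ab s : ℕ)
    (hoccW : ∀ i < s, OccursAt W Y (ab + i * g))
    (ub : ℕ) (hub : IsGreatest {d : ℕ | d ≤ cb ∧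
      (X.drop (cb - d)).take d = (X.drop (cb + g - d)).take d} ub)
    (vb : ℕ) (hvb : IsGreatest {d : ℕ | d ≤ ab ∧
      (Y.drop (ab - d)).take d = (Y.drop (ab + g - d)).take d} vb)
    (hubcb : ub < cb) :
    (∀ i < s, cb ≤ ab + i * g → OccursAt X Y (ab + i * g - cb) →
      i * g + vb = ub) ∧
    (∀ i < s, ∀ j < s,
      cb ≤ ab + i * g → OccursAt X Y (ab + i * g - cb) →
      cb ≤ ab + j * g → OccursAt X Y (ab + j * g - cb) → i = j) := by
  obtain ⟨hg, hgW, -⟩ := hgW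
  have hX : cb + g ≤ X.length := by
    have : W.length ≤ X.length - cb := by simp [hW]
    omega
  have key : ∀ i < s, cb ≤ ab + i * g → OccursAt X Y (ab + i * g - cb) → i * g + vb = ub :=
    fun i hi hca hocc =>
      mul_add_eq_of_occursAt hX hgW (fun j hj => hoccW j (by omega)) hub hvb hubcb hca hocc
  refine ⟨key, fun i hi j hj hci hoi hcj hoj => ?_⟩
  have hi' := key i hi hci hoi
  have hj' := key j hj hcj hoj
  exact Nat.eq_of_mul_eq_mul_right hg (by omega)

/-- Let `W = X[c̄..c)` with `0 ≤ c̄ < c ≤ |X|`, let `g` with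
`0 < g ≤ |W|` be a period of `W`, and let `Y[ā+ig..ā+ig+|W|) = W` for all
`i ∈ [0..s)`. Let `ū` and `v̄` be the maximal backward extensions of the period `g`
at position `c̄` of `X` and at position `ā` of `Y`, and assume `ū < c̄`. Then for
every `i ∈ [0..s)`, if `X` occurs in `Y` at position `ā + ig − c̄` (nonnegative, with
the occurrence inside `Y`), then `ig = ū − v̄` (i.e. `ig + v̄ = ū`); in particular at
most one `i ∈ [0..s)` yields an occurrence. -/
theorem left_mismatch_unique_candidate {β : Type} (X Y : List β)
    (cb c : ℕ) (hcb : cb < c) (hc : c ≤ X.length)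
    (W : List β) (hW : W = (X.drop cb).take (c - cb))
    (g : ℕ) (hgW : IsPeriod W g)
    (ab s : ℕ) (hs : 1 ≤ s) (hfit : ab + (s - 1) * g + W.length ≤ Y.length)
    (hoccW : ∀ i < s, OccursAt W Y (ab + i * g))
    (ub : ℕ) (hub : IsGreatest {d : ℕ | d ≤ cb ∧
      (X.drop (cb - d)).take d = (X.drop (cb + g - d)).take d} ub)
    (vb : ℕ) (hvb : IsGreatest {d : ℕ | d ≤ ab ∧
      (Y.drop (ab - d)).take d = (Y.drop (ab + g - d)).take d} vb)
    (hubcb : ub < cb) :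
    (∀ i < s, cb ≤ ab + i * g → OccursAt X Y (ab + i * g - cb) →
      i * g + vb = ub) ∧
    (∀ i < s, ∀ j < s,
      cb ≤ ab + i * g → OccursAt X Y (ab + i * g - cb) →
      cb ≤ ab + j * g → OccursAt X Y (ab + j * g - cb) → i = j) :=
  left_mismatch_unique_candidate_general X Y cb c W hW g hgW ab s hoccW ub hub vb hvb hubcb

end IPM
end

section
/- Let X, Y be strings over an alphabet Σ, let 0 ≤ c̄ < c ≤ |X|, W = X[c̄..c), and let g be an integer with 0 < g ≤ |W| that is a period of W. Let ā ≥ 0 and s ≥ 1 be integers with ā + (s−1)g + |W| ≤ |Y| such that Y[ā+ig..ā+ig+|W|) = W for every i ∈ [0..s), and set a = ā + (s−1)g + |W|. Define u = max{d : c + d ≤ |X| and X[c..c+d) = X[c−g..c−g+d)} and v = max{d : a + d ≤ |Y| and Y[a..a+d) = Y[a−g..a−g+d)}, and assume u < |X| − c. Then for every i ∈ [0..s), if X occurs in Y at position p = ā + ig − c̄ (with 0 ≤ p and p + |X| ≤ |Y|), then (s−1−i)g = u − v, i.e., p = a − c + v − u; in particular, there is at most one i ∈ [0..s) for which X occurs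 in Y at position ā + ig − c̄. -/
/-!
The occurrence of `X` at `p = ā + ig − c̄` carries the first failure of the period `g` after
position `c` of `X` (at offset `u`) to position `p + c = ā + ig + |W|` of `Y`. The copies of `W`
form a run `Y[ā..a)` with period `g`, so this failure cannot happen before `a`; hence
`k = (s−1−i)g ≤ u`, and seen from `a = p + c + k` the period fails first at offset `u − k`,
i.e. `v = u − k`. Since `g > 0`, `i` is determined by `u − v`.
-/

namespace IPM

section

variable {β : Type}

theorem take_drop_eq_take_drop_iff_s17 (L : List β) (x y n : ℕ) :
    (L.drop x).take n = (L.drop y).take n ↔ ∀ t < n, L[x + t]? = L[y + t]? := by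
  constructor
  · intro h t ht
    simpa [List.getElem?_take, ht] using congrArg (·[t]?) h
  · intro h
    refine List.ext_getElem? fun t => ?_
    by_cases ht : t < n <;> simp [ht, h]

theorem OccursAt.getElem?_eq {W S : List β} {p : ℕ} (h : OccursAt W S p) {t : ℕ}
    (ht : t < W.length) : S[p + t]? = W[t]? := by
  simpa [List.getElem?_take, ht] using congrArg (·[t]?) h.2

def matchLengths (L : List β) (x y : ℕ) : Set ℕ :=
  {d | x + d ≤ L.length ∧ (L.drop x).take d = (L.drop y).take d}

theorem mem_matchLengths_iff {L : List β} {x y d : ℕ} :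
    d ∈ matchLengths L x y ↔ x + d ≤ L.length ∧ ∀ t < d, L[x + t]? = L[y + t]? := by
  rw [matchLengths, Set.mem_ofPred_eq, take_drop_eq_take_drop_iff_s17]

def FirstMismatch (L : List β) (x y d : ℕ) : Prop :=
  (∀ t < d, L[x + t]? = L[y + t]?) ∧ L[x + d]? ≠ L[y + d]?

namespace FirstMismatch

theorem of_isGreatest {L : List β} {x y u : ℕ} (hu : IsGreatest (matchLengths L x y) u)
    (hlt : x + u < L.length) : FirstMismatch L x y u := by
  have hagree := (mem_matchLengths_iff.1 hu.1).2
  refine ⟨hagree, fun heq => ?_⟩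
  have hmem : u + 1 ∈ matchLengths L x y := by
    refine mem_matchLengths_iff.2 ⟨hlt, fun t ht => ?_⟩
    rcases Nat.lt_succ_iff_lt_or_eq.1 ht with ht | rfl
    exacts [hagree t ht, heq]
  exact absurd (hu.2 hmem) (by omega)

theorem eq_of_isGreatest {L : List β} {x y v d : ℕ} (h : FirstMismatch L x y d)
    (hv : IsGreatest (matchLengths L x y) v) (hd : x + d < L.length) : v = d := by
  have hdv : d ≤ v := hv.2 (mem_matchLengths_iff.2 ⟨hd.le, h.1⟩)
  by_contra hne
  exact h.2 ((mem_matchLengths_iff.1 hv.1).2 d (by omega))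

theorem shift {L : List β} {x y d : ℕ} (h : FirstMismatch L x y d) {k : ℕ} (hk : k ≤ d) :
    FirstMismatch L (x + k) (y + k) (d - k) := by
  refine ⟨fun t ht => ?_, ?_⟩
  · simpa only [Nat.add_assoc] using h.1 (k + t) (by omega)
  · rw [Nat.add_assoc, Nat.add_assoc, Nat.add_sub_cancel' hk]
    exact h.2

theorem of_occursAt {X Y : List β} {p c c' d : ℕ} (h : FirstMismatch X c c' d)
    (hX : OccursAt X Y p) (hc : c + d < X.length) (hc' : c' ≤ c) :
    FirstMismatch Y (p + c) (p + c') d := by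
  refine ⟨fun t ht => ?_, ?_⟩
  · rw [Nat.add_assoc, Nat.add_assoc, hX.getElem?_eq (by omega), hX.getElem?_eq (by omega)]
    exact h.1 t ht
  · rw [Nat.add_assoc, Nat.add_assoc, hX.getElem?_eq (by omega), hX.getElem?_eq (by omega)]
    exact h.2

end FirstMismatch

def HasPeriodOn (L : List β) (g lo hi : ℕ) : Prop :=
  ∀ x, lo ≤ x → x + g < hi → L[x]? = L[x + g]?

theorem hasPeriodOn_of_occursAt {W Y : List β} {g lo n : ℕ} (hW : IsPeriod W g)
    (hocc : ∀ i ≤ n, OccursAt W Y (lo + i * g)) :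
    HasPeriodOn Y g lo (lo + n * g + W.length) := by
  obtain ⟨-, hgW, hper⟩ := hW
  induction n with
  | zero =>
    intro x hlo hx
    obtain ⟨t, rfl⟩ := Nat.exists_eq_add_of_le hlo
    have h0 := (hocc 0 le_rfl).getElem?_eq (t := t)
    have h0' := (hocc 0 le_rfl).getElem?_eq (t := t + g)
    simp only [zero_mul, Nat.add_zero] at h0 h0' hx ⊢
    rw [h0 (by omega), hper t (by omega), ← h0' (by omega), Nat.add_assoc]
  | succ n ih =>
    intro x hlo hx
    by_cases hx' : x + g < lo + n * g + W.length
    · exact ih (fun i hi => hocc i (by omega)) x hlo hx'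
    -- otherwise `x` lies in the `n`-th copy and `x + g` at the same offset in the next one
    obtain ⟨t, rfl⟩ : ∃ t, x = lo + n * g + t := ⟨x - (lo + n * g), by omega⟩
    have hn := (hocc n (by omega)).getElem?_eq (t := t)
    have hn' := (hocc (n + 1) le_rfl).getElem?_eq (t := t)
    rw [Nat.succ_mul] at hn' hx
    rw [hn (by omega), ← hn' (by omega)]
    congr 1
    ring

theorem FirstMismatch.le_of_hasPeriodOn {L : List β} {g lo hi x y d : ℕ}
    (h : FirstMismatch L x y d) (hxy : y + g = x) (hper : HasPeriodOn L g lo hi)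
    (hlo : lo ≤ y) : hi ≤ x + d := by
  by_contra hlt
  refine h.2 ?_
  subst hxy
  rw [hper (y + d) (by omega) (by omega), Nat.add_right_comm]

end

theorem right_mismatch_unique_candidate_general {β : Type} (X Y : List β)
    (cb c : ℕ)
    (W : List β) (hW : W = (X.drop cb).take (c - cb))
    (g : ℕ) (hgW : IsPeriod W g)
    (ab s : ℕ)
    (hoccW : ∀ i < s, OccursAt W Y (ab + i * g))
    (a : ℕ) (ha : a = ab + (s - 1) * g + W.length)
    (u : ℕ) (hu : IsGreatest {d : ℕ | c + d ≤ X.length ∧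
      (X.drop c).take d = (X.drop (c - g)).take d} u)
    (v : ℕ) (hv : IsGreatest {d : ℕ | a + d ≤ Y.length ∧
      (Y.drop a).take d = (Y.drop (a - g)).take d} v)
    (huc : u < X.length - c) :
    (∀ i < s, cb ≤ ab + i * g → OccursAt X Y (ab + i * g - cb) →
      (s - 1 - i) * g + v = u) ∧
    (∀ i < s, ∀ j < s,
      cb ≤ ab + i * g → OccursAt X Y (ab + i * g - cb) →
      cb ≤ ab + j * g → OccursAt X Y (ab + j * g - cb) → i = j) := by
  have hWlen : W.length = c - cb := by rw [hW, List.length_take, List.length_drop]; omega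
  have hg0 : 0 < g := hgW.1
  have hgm : g ≤ c - cb := hWlen ▸ hgW.2.1
  have key : ∀ i < s, cb ≤ ab + i * g → OccursAt X Y (ab + i * g - cb) →
      (s - 1 - i) * g + v = u := by
    intro i hi hcbi hX
    generalize hp : ab + i * g - cb = p at hX
    generalize hk : (s - 1 - i) * g = k
    have hsplit : (s - 1) * g = i * g + k := by rw [← hk, ← Nat.add_mul]; congr 1; omega
    have hrun : HasPeriodOn Y g ab a := by
      rw [ha]; exact hasPeriodOn_of_occursAt hgW fun j hj => hoccW j (by omega)
    have hXmis : FirstMismatch X c (c - g) u := .of_isGreatest hu (by omega)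
    have hYmis : FirstMismatch Y (p + c) (p + (c - g)) u :=
      hXmis.of_occursAt hX (by omega) (Nat.sub_le c g)
    have hku : k ≤ u := by
      have := hYmis.le_of_hasPeriodOn (by omega) hrun (by omega)
      omega
    have hv' : v = u - k := by
      have hshift := hYmis.shift hku
      rw [show p + c + k = a by omega, show p + (c - g) + k = a - g by omega] at hshift
      exact hshift.eq_of_isGreatest hv (by have := hX.1; omega)
    omega
  refine ⟨key, fun i hi j hj hcbi hXi hcbj hXj => ?_⟩
  have hij : (s - 1 - i) * g = (s - 1 - j) * g := by
    have := (key i hi hcbi hXi).trans (key j hj hcbj hXj).symm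
    omega
  have := Nat.eq_of_mul_eq_mul_right hg0 hij
  omega

/-- Let `W = X[c̄..c)` with `0 ≤ c̄ < c ≤ |X|`, let `g` with
`0 < g ≤ |W|` be a period of `W`, let `Y[ā+ig..ā+ig+|W|) = W` for all `i ∈ [0..s)`,
and set `a = ā + (s−1)g + |W|`. Let `u` and `v` be the maximal forward extensions of
the period `g` at position `c` of `X` and at position `a` of `Y`, and assume
`u < |X| − c`. Then for every `i ∈ [0..s)`, if `X` occurs in `Y` at position
`ā + ig − c̄` (nonnegative, with the occurrence inside `Y`), then `(s−1−i)g = u − v`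
(i.e. `(s−1−i)g + v = u`); in particular at most one `i ∈ [0..s)` yields an
occurrence. -/
theorem right_mismatch_unique_candidate {β : Type} (X Y : List β)
    (cb c : ℕ) (hcb : cb < c) (hc : c ≤ X.length)
    (W : List β) (hW : W = (X.drop cb).take (c - cb))
    (g : ℕ) (hgW : IsPeriod W g)
    (ab s : ℕ) (hs : 1 ≤ s) (hfit : ab + (s - 1) * g + W.length ≤ Y.length)
    (hoccW : ∀ i < s, OccursAt W Y (ab + i * g))
    (a : ℕ) (ha : a = ab + (s - 1) * g + W.length)
    (u : ℕ) (hu : IsGreatest {d : ℕ | c + d ≤ X.length ∧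
      (X.drop c).take d = (X.drop (c - g)).take d} u)
    (v : ℕ) (hv : IsGreatest {d : ℕ | a + d ≤ Y.length ∧
      (Y.drop a).take d = (Y.drop (a - g)).take d} v)
    (huc : u < X.length - c) :
    (∀ i < s, cb ≤ ab + i * g → OccursAt X Y (ab + i * g - cb) →
      (s - 1 - i) * g + v = u) ∧
    (∀ i < s, ∀ j < s,
      cb ≤ ab + i * g → OccursAt X Y (ab + i * g - cb) →
      cb ≤ ab + j * g → OccursAt X Y (ab + j * g - cb) → i = j) :=
  right_mismatch_unique_candidate_general X Y cb c W hW g hgW ab s hoccW a ha u hu v hv huc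

end IPM
end

section
/- Let X be a string over an alphabet Σ, let 0 ≤ c̄ < c ≤ |X|, W = X[c̄..c), and let g be an integer with 0 < g ≤ |W| that is a period of W. Then g is a period of X if and only if X[0..c̄) = X[g..c̄+g) and X[c..|X|) = X[c−g..|X|−g); equivalently, g is a period of X if and only if the maximal backward extension ū = max{d : d ≤ c̄ and X[c̄−d..c̄) = X[c̄+g−d..c̄+g)} equals c̄ and the maximal forward extension u = max{d : c + d ≤ |X| and X[c..c+d) = X[c−g..c−g+d)} equals |X| − c. -/
/-!
`g` is a period of `X` iff `X[t] = X[t+g]` for every window `t + g < |X|`. Since `g` is a period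
of `W = X[c̄..c)`, this already holds for the windows `c̄ ≤ t`, `t + g < c`; the remaining windows
`t < c̄` and `t ≥ c − g` are exactly the two slice equalities. The maximal extensions `ū ≤ c̄` and
`u ≤ |X| − c` reach their bounds iff these bounds are themselves admissible extensions, which
are again the two slice equalities.
-/

namespace IPM

theorem _root_.IsGreatest.eq_iff_mem {α : Type*} [PartialOrder α] {S : Set α} {m n : α}
    (h : IsGreatest S m) (hn : n ∈ upperBounds S) : m = n ↔ n ∈ S :=
  ⟨fun e => e ▸ h.1, fun hnS => le_antisymm (hn h.1) (h.2 hnS)⟩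

section
variable {β : Type} (X : List β)

theorem take_drop_eq_take_drop_iff_s18 {a b n : ℕ} :
    (X.drop a).take n = (X.drop b).take n ↔ ∀ i < n, X[a + i]? = X[b + i]? := by
  simp only [List.ext_getElem?_iff, List.getElem?_take, List.getElem?_drop]
  refine ⟨fun h i hi => by simpa [hi] using h i, fun h i => ?_⟩
  split_ifs with hi
  · exact h i hi
  · rfl

theorem take_eq_take_drop_iff {g n : ℕ} :
    X.take n = (X.drop g).take n ↔ ∀ t < n, X[t]? = X[t + g]? := by
  simpa [add_comm g] using take_drop_eq_take_drop_iff_s18 X (a := 0) (b := g) (n := n)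

theorem drop_eq_take_drop_iff {c g : ℕ} (hgc : g ≤ c) :
    X.drop c = (X.drop (c - g)).take (X.length - c) ↔
      ∀ t, c - g ≤ t → t + g < X.length → X[t]? = X[t + g]? := by
  conv_lhs => rw [← List.take_length (l := X.drop c), List.length_drop]
  rw [take_drop_eq_take_drop_iff_s18]
  constructor
  · intro h t ht htX
    have := h (t - (c - g)) (by omega)
    rw [show c + (t - (c - g)) = t + g by omega, show c - g + (t - (c - g)) = t by omega] at this
    exact this.symm
  · intro h i hi
    have := h (c - g + i) (by omega) (by omega)
    rw [show c - g + i + g = c + i by omega] at this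
    exact this.symm

theorem IsPeriod.getElem?_add_of_slice {a b g t : ℕ}
    (h : IsPeriod ((X.drop a).take (b - a)) g) (hat : a ≤ t) (htb : t + g < b)
    (htX : t + g < X.length) : X[t]? = X[t + g]? := by
  have := h.2.2 (t - a) (by simp only [List.length_take, List.length_drop]; omega)
  simpa [List.getElem?_take, show t - a < b - a by omega, show t - a + g < b - a by omega,
    show a + (t - a) = t by omega, show a + (t - a + g) = t + g by omega] using this

theorem isPeriod_iff_of_isPeriod_slice {cb c g : ℕ}
    (hW : IsPeriod ((X.drop cb).take (c - cb)) g) :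
    IsPeriod X g ↔ (∀ t < cb, X[t]? = X[t + g]?) ∧
      ∀ t, c - g ≤ t → t + g < X.length → X[t]? = X[t + g]? := by
  have hlen : g ≤ c - cb ∧ cb + g ≤ X.length := by
    have hg := hW.1
    have hgW := hW.2.1
    simp only [List.length_take, List.length_drop] at hgW
    omega
  refine ⟨fun hX => ⟨fun t ht => hX.2.2 t (by omega), fun t _ => hX.2.2 t⟩,
    fun ⟨hpre, hsuf⟩ => ⟨hW.1, by omega, fun t htX => ?_⟩⟩
  rcases lt_or_ge t cb with htcb | hcbt
  · exact hpre t htcb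
  rcases lt_or_ge (t + g) c with htc | hct
  · exact hW.getElem?_add_of_slice X hcbt htc htX
  · exact hsuf t (by omega) htX

end

theorem period_extends_iff_general {β : Type} (X : List β)
    (cb c : ℕ)
    (W : List β) (hW : W = (X.drop cb).take (c - cb))
    (g : ℕ) (hgW : IsPeriod W g)
    (ub : ℕ) (hub : IsGreatest {d : ℕ | d ≤ cb ∧
      (X.drop (cb - d)).take d = (X.drop (cb + g - d)).take d} ub)
    (u : ℕ) (hu : IsGreatest {d : ℕ | c + d ≤ X.length ∧
      (X.drop c).take d = (X.drop (c - g)).take d} u) :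
    (IsPeriod X g ↔
      (X.take cb = (X.drop g).take cb ∧
        X.drop c = (X.drop (c - g)).take (X.length - c))) ∧
    (IsPeriod X g ↔ (ub = cb ∧ u = X.length - c)) := by
  subst hW
  have hgc : g ≤ c := by
    have hgW_len := hgW.2.1
    simp only [List.length_take, List.length_drop] at hgW_len
    omega
  have hperiod : IsPeriod X g ↔
      (X.take cb = (X.drop g).take cb ∧
        X.drop c = (X.drop (c - g)).take (X.length - c)) := by
    rw [isPeriod_iff_of_isPeriod_slice X hgW, take_eq_take_drop_iff, drop_eq_take_drop_iff X hgc]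
  have hub_eq : ub = cb ↔ X.take cb = (X.drop g).take cb := by
    rw [hub.eq_iff_mem fun d hd => hd.1]
    simp
  have hu_eq : u = X.length - c ↔ X.drop c = (X.drop (c - g)).take (X.length - c) := by
    rw [hu.eq_iff_mem fun d hd => by have := hd.1; omega]
    have hcX := hu.1.1
    simp [List.take_of_length_le, show c + (X.length - c) ≤ X.length by omega]
  exact ⟨hperiod, by rw [hperiod, hub_eq, hu_eq]⟩

/-- Let `W = X[c̄..c)` with `0 ≤ c̄ < c ≤ |X|` and let `g` with
`0 < g ≤ |W|` be a period of `W`. Then `g` is a period of `X` iff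
`X[0..c̄) = X[g..c̄+g)` and `X[c..|X|) = X[c−g..|X|−g)`; equivalently, `g` is a
period of `X` iff the maximal backward extension `ū` equals `c̄` and the maximal
forward extension `u` equals `|X| − c`. -/
theorem period_extends_iff {β : Type} (X : List β)
    (cb c : ℕ) (hcb : cb < c) (hc : c ≤ X.length)
    (W : List β) (hW : W = (X.drop cb).take (c - cb))
    (g : ℕ) (hgW : IsPeriod W g)
    (ub : ℕ) (hub : IsGreatest {d : ℕ | d ≤ cb ∧
      (X.drop (cb - d)).take d = (X.drop (cb + g - d)).take d} ub)
    (u : ℕ) (hu : IsGreatest {d : ℕ | c + d ≤ X.length ∧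
      (X.drop c).take d = (X.drop (c - g)).take d} u) :
    (IsPeriod X g ↔
      (X.take cb = (X.drop g).take cb ∧
        X.drop c = (X.drop (c - g)).take (X.length - c))) ∧
    (IsPeriod X g ↔ (ub = cb ∧ u = X.length - c)) :=
  period_extends_iff_general X cb c W hW g hgW ub hub u hu

end IPM
end
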